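/- arXiv:2205.09386 — 9 statements merged into one kernel-verified Lean document; each statement's English description precedes it below -/
import Mathlib

section
/- Fix a real number σ ≥ 3 and an integer n ≥ 3, and place four candidates on the real line at y_1 = −σ+2, y_2 = 0, y_3 = 1, y_4 = 2. Then every strategy-proof deterministic two-winner scv mechanism f for these four candidates and n voters has distortion at least (1/3)·min{n, √σ} on this candidate configuration. -/
open Finset

/-- Cost of a point `z` when the pair of candidates `(y k, y l)` is elected:
the distance to the closer of the two winners. -/
noncomputable def pairCost {α : Type*} [PseudoMetricSpace α] {m : ℕ}
    (y : Fin m → α) (k l : Fin m) (z : α) : ℝ :=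
  min (dist z (y k)) (dist z (y l))

/-- Social cost of the pair `(y k, y l)` on the location profile `x`. -/
noncomputable def socialCost {α : Type*} [PseudoMetricSpace α] {m n : ℕ}
    (y : Fin m → α) (k l : Fin m) (x : Fin n → α) : ℝ :=
  ∑ i, pairCost y k l (x i)

/-- Optimal social cost over all pairs of distinct candidates. -/
noncomputable def OPT {α : Type*} [PseudoMetricSpace α] {m n : ℕ}
    (y : Fin m → α) (x : Fin n → α) : ℝ :=
  sInf {c : ℝ | ∃ k l : Fin m, k ≠ l ∧ c = socialCost y k l x}

/-- A location profile `x` is consistent with an action profile `a` if every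
voter votes for (one of) her nearest candidate(s). -/
def Consistent {α : Type*} [PseudoMetricSpace α] {m n : ℕ}
    (y : Fin m → α) (a : Fin n → Fin m) (x : Fin n → α) : Prop :=
  ∀ (i : Fin n) (k : Fin m), dist (x i) (y (a i)) ≤ dist (x i) (y k)

/-- Strategy-proofness of a deterministic two-winner mechanism. -/
def DetSP {α : Type*} [PseudoMetricSpace α] {m n : ℕ}
    (y : Fin m → α) (f : (Fin n → Fin m) → Fin m × Fin m) : Prop :=
  ∀ (i : Fin n) (xi : α) (a : Fin n → Fin m) (astar ai' : Fin m),
    (∀ k, dist xi (y astar) ≤ dist xi (y k)) →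
    pairCost y (f (Function.update a i astar)).1 (f (Function.update a i astar)).2 xi ≤
      pairCost y (f (Function.update a i ai')).1 (f (Function.update a i ai')).2 xi

section Aux

set_option linter.unusedVariables false

lemma pairCost_nonneg' {α : Type*} [PseudoMetricSpace α] {m : ℕ}
    (y : Fin m → α) (k l : Fin m) (z : α) : 0 ≤ pairCost y k l z :=
  le_min dist_nonneg dist_nonneg

lemma socialCost_nonneg' {α : Type*} [PseudoMetricSpace α] {m n : ℕ}
    (y : Fin m → α) (k l : Fin m) (x : Fin n → α) : 0 ≤ socialCost y k l x :=
  Finset.sum_nonneg fun i _ => pairCost_nonneg' y k l (x i)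


lemma pairCost_comm' {α : Type*} [PseudoMetricSpace α] {m : ℕ}
    (y : Fin m → α) (k l : Fin m) (z : α) : pairCost y k l z = pairCost y l k z :=
  min_comm _ _

lemma socialCost_comm' {α : Type*} [PseudoMetricSpace α] {m n : ℕ}
    (y : Fin m → α) (k l : Fin m) (x : Fin n → α) :
    socialCost y k l x = socialCost y l k x :=
  Finset.sum_congr rfl fun i _ => min_comm _ _

lemma sum_ite_classes {n : ℕ} [NeZero n] (b : ℕ) (hb : b + 1 ≤ n) (u v w : ℝ) :
    ∑ i : Fin n, (if i = 0 then u else if (i : ℕ) ≤ b then v else w)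
      = u + (b : ℝ) * v + ((n - 1 - b : ℕ) : ℝ) * w := by
  have h := Fin.sum_univ_eq_sum_range (fun j => if j = 0 then u else if j ≤ b then v else w) n
  have he : ∀ i : Fin n, (if i = 0 then u else if (i : ℕ) ≤ b then v else w)
      = (fun j => if j = 0 then u else if j ≤ b then v else w) (i : ℕ) := by
    intro i
    simp only [Fin.ext_iff, Fin.val_zero]
  rw [Finset.sum_congr rfl (fun i _ => he i)]
  simp only at h ⊢
  rw [h, ← Finset.sum_range_add_sum_Ico _ hb, Finset.sum_range_succ']
  have h1 : ∀ j ∈ Finset.range b, (if j + 1 = 0 then u else if j + 1 ≤ b then v else w) = v := by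
    intro j hj
    rw [Finset.mem_range] at hj
    rw [if_neg (by omega), if_pos (by omega)]
  have h2 : ∀ j ∈ Finset.Ico (b+1) n, (if j = 0 then u else if j ≤ b then v else w) = w := by
    intro j hj
    rw [Finset.mem_Ico] at hj
    rw [if_neg (by omega), if_neg (by omega)]
  rw [Finset.sum_congr rfl h1, Finset.sum_congr rfl h2, Finset.sum_const, Finset.sum_const,
    Nat.card_Ico, Finset.card_range, if_pos rfl, nsmul_eq_mul, nsmul_eq_mul]
  have : n - (b+1) = n - 1 - b := by omega
  rw [this]; ring

variable {σ : ℝ}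

lemma fin4cases : ∀ k : Fin 4, k = 0 ∨ k = 1 ∨ k = 2 ∨ k = 3 := by decide

lemma dist_ge' {c a b : ℝ} (h : c ≤ a - b ∨ c ≤ b - a) : c ≤ dist a b := by
  rw [Real.dist_eq]
  rcases h with h|h
  · exact le_trans h (le_abs_self _)
  · rw [abs_sub_comm]; exact le_trans h (le_abs_self _)

lemma dist_eval' {a b c : ℝ} (hc : 0 ≤ c) (h : a - b = c ∨ b - a = c) :
    dist a b = c := by
  rcases h with h|h
  · rw [Real.dist_eq, h, abs_of_nonneg hc]
  · rw [Real.dist_eq, abs_sub_comm, h, abs_of_nonneg hc]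

lemma y_eval0 : (![-σ+2,0,1,2] : Fin 4 → ℝ) 0 = -σ+2 := rfl
lemma y_eval1 : (![-σ+2,0,1,2] : Fin 4 → ℝ) 1 = 0 := rfl
lemma y_eval2 : (![-σ+2,0,1,2] : Fin 4 → ℝ) 2 = 1 := rfl
lemma y_eval3 : (![-σ+2,0,1,2] : Fin 4 → ℝ) 3 = 2 := rfl

lemma d_one (hσ : 3 ≤ σ) {k : Fin 4} (hk : k ≠ 2) :
    1 ≤ dist (1:ℝ) (![-σ+2,0,1,2] k) := by
  rcases fin4cases k with rfl|rfl|rfl|rfl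
  · rw [y_eval0]; exact dist_ge' (Or.inl (by linarith))
  · rw [y_eval1]; exact dist_ge' (Or.inl (by linarith))
  · exact absurd rfl hk
  · rw [y_eval3]; exact dist_ge' (Or.inr (by linarith))

lemma d_two (hσ : 3 ≤ σ) {k : Fin 4} (hk : k ≠ 3) :
    1 ≤ dist (2:ℝ) (![-σ+2,0,1,2] k) := by
  rcases fin4cases k with rfl|rfl|rfl|rfl
  · rw [y_eval0]; exact dist_ge' (Or.inl (by linarith))
  · rw [y_eval1]; exact dist_ge' (Or.inl (by linarith))
  · rw [y_eval2]; exact dist_ge' (Or.inl (by linarith))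
  · exact absurd rfl hk

lemma d_A (hσ : 3 ≤ σ) {k : Fin 4} (hk : k ≠ 0) :
    1 ≤ dist (-σ+2 : ℝ) (![-σ+2,0,1,2] k) := by
  rcases fin4cases k with rfl|rfl|rfl|rfl
  · exact absurd rfl hk
  · rw [y_eval1]; exact dist_ge' (Or.inr (by linarith))
  · rw [y_eval2]; exact dist_ge' (Or.inr (by linarith))
  · rw [y_eval3]; exact dist_ge' (Or.inr (by linarith))

lemma d_half (hσ : 3 ≤ σ) (k : Fin 4) :
    1/2 ≤ dist (1/2 : ℝ) (![-σ+2,0,1,2] k) := by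
  rcases fin4cases k with rfl|rfl|rfl|rfl
  · rw [y_eval0]; exact dist_ge' (Or.inl (by linarith))
  · rw [y_eval1]; exact dist_ge' (Or.inl (by linarith))
  · rw [y_eval2]; exact dist_ge' (Or.inr (by linarith))
  · rw [y_eval3]; exact dist_ge' (Or.inr (by linarith))

lemma e_m0 (hσ : 3 ≤ σ) : dist (1-σ/2) (![-σ+2,0,1,2] 0) = σ/2 - 1 := by
  rw [y_eval0]; exact dist_eval' (by linarith) (Or.inl (by ring))

lemma e_m1 (hσ : 3 ≤ σ) : dist (1-σ/2) (![-σ+2,0,1,2] 1) = σ/2 - 1 := by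
  rw [y_eval1]; exact dist_eval' (by linarith) (Or.inr (by ring))

lemma e_m2 (hσ : 3 ≤ σ) : dist (1-σ/2) (![-σ+2,0,1,2] 2) = σ/2 := by
  rw [y_eval2]; exact dist_eval' (by linarith) (Or.inr (by ring))

lemma e_m3 (hσ : 3 ≤ σ) : dist (1-σ/2) (![-σ+2,0,1,2] 3) = σ/2 + 1 := by
  rw [y_eval3]; exact dist_eval' (by linarith) (Or.inr (by ring))

lemma e_half1 : dist (1/2 : ℝ) (![-σ+2,0,1,2] 1) = 1/2 := by
  rw [y_eval1]; exact dist_eval' (by norm_num) (Or.inl (by ring))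

lemma e_one2 : dist (1 : ℝ) (![-σ+2,0,1,2] 2) = 0 := by
  rw [y_eval2]; exact dist_eval' le_rfl (Or.inl (by ring))

lemma e_two3 : dist (2 : ℝ) (![-σ+2,0,1,2] 3) = 0 := by
  rw [y_eval3]; exact dist_eval' le_rfl (Or.inl (by ring))

lemma e_A0 : dist (-σ+2 : ℝ) (![-σ+2,0,1,2] 0) = 0 := by
  rw [y_eval0]; exact dist_eval' le_rfl (Or.inl (by ring))

lemma pc23_m (hσ : 3 ≤ σ) : pairCost (![-σ+2,0,1,2]) 2 3 (1-σ/2) = σ/2 := by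
  rw [pairCost, e_m2 hσ, e_m3 hσ]; exact min_eq_left (by linarith)

lemma pc23_half (hσ : 3 ≤ σ) : pairCost (![-σ+2,0,1,2]) 2 3 (1/2) = 1/2 := by
  rw [pairCost, y_eval2, y_eval3,
    dist_eval' (by linarith : (0:ℝ) ≤ 1/2) (Or.inr (by ring : (1:ℝ) - 1/2 = 1/2)),
    dist_eval' (by linarith : (0:ℝ) ≤ 3/2) (Or.inr (by ring : (2:ℝ) - 1/2 = 3/2))]
  exact min_eq_left (by linarith)

lemma pc23_A (hσ : 3 ≤ σ) : pairCost (![-σ+2,0,1,2]) 2 3 (-σ+2) = σ-1 := by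
  rw [pairCost, y_eval2, y_eval3,
    dist_eval' (by linarith : (0:ℝ) ≤ σ-1) (Or.inr (by ring)),
    dist_eval' (by linarith : (0:ℝ) ≤ σ) (Or.inr (by ring))]
  exact min_eq_left (by linarith)

lemma pc03_A (hσ : 3 ≤ σ) : pairCost (![-σ+2,0,1,2]) 0 3 (-σ+2) = 0 := by
  rw [pairCost, y_eval0, y_eval3,
    dist_eval' (le_refl (0:ℝ)) (Or.inl (by ring)),
    dist_eval' (by linarith : (0:ℝ) ≤ σ) (Or.inr (by ring))]
  exact min_eq_left (by linarith)

lemma pc03_one (hσ : 3 ≤ σ) : pairCost (![-σ+2,0,1,2]) 0 3 1 = 1 := by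
  rw [pairCost, y_eval0, y_eval3,
    dist_eval' (by linarith : (0:ℝ) ≤ σ-1) (Or.inl (by ring)),
    dist_eval' (by linarith : (0:ℝ) ≤ 1) (Or.inr (by ring))]
  exact min_eq_right (by linarith)

lemma pc03_two (hσ : 3 ≤ σ) : pairCost (![-σ+2,0,1,2]) 0 3 2 = 0 := by
  rw [pairCost, y_eval0, y_eval3,
    dist_eval' (by linarith : (0:ℝ) ≤ σ) (Or.inl (by ring)),
    dist_eval' (le_refl (0:ℝ)) (Or.inl (by ring))]
  exact min_eq_right (by linarith)

lemma pc23_one (hσ : 3 ≤ σ) : pairCost (![-σ+2,0,1,2]) 2 3 1 = 0 := by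
  rw [pairCost, y_eval2, y_eval3,
    dist_eval' (le_refl (0:ℝ)) (Or.inl (by ring)),
    dist_eval' (by linarith : (0:ℝ) ≤ 1) (Or.inr (by ring))]
  exact min_eq_left (by linarith)

lemma pc23_two (hσ : 3 ≤ σ) : pairCost (![-σ+2,0,1,2]) 2 3 2 = 0 := by
  rw [pairCost, y_eval2, y_eval3,
    dist_eval' (by linarith : (0:ℝ) ≤ 1) (Or.inl (by ring)),
    dist_eval' (le_refl (0:ℝ)) (Or.inl (by ring))]
  exact min_eq_right (by linarith)


lemma pairCost_le_socialCost {α : Type*} [PseudoMetricSpace α] {m nn : ℕ}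
    (y : Fin m → α) (k l : Fin m) (x : Fin nn → α) (i0 : Fin nn) :
    pairCost y k l (x i0) ≤ socialCost y k l x := by
  unfold socialCost
  exact Finset.single_le_sum (fun i _ => pairCost_nonneg' y k l (x i)) (Finset.mem_univ i0)

end Aux

set_option maxHeartbeats 4000000 in
/-- Four candidates on the real line at `-σ+2, 0, 1, 2` (`σ ≥ 3`): every
strategy-proof deterministic two-winner scv mechanism has distortion at least
`(1/3) · min {n, √σ}` on this configuration. -/
theorem stmt1 (σ : ℝ) (hσ : 3 ≤ σ) (n : ℕ) (hn : 3 ≤ n)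
    (y : Fin 4 → ℝ) (hy : y = ![-σ + 2, 0, 1, 2])
    (f : (Fin n → Fin 4) → Fin 4 × Fin 4)
    (hvalid : ∀ a, (f a).1 ≠ (f a).2) (hsp : DetSP y f) :
    ∃ (a : Fin n → Fin 4) (x : Fin n → ℝ), Consistent y a x ∧
      (1 / 3) * min (n : ℝ) (Real.sqrt σ) ≤
        socialCost y (f a).1 (f a).2 x / OPT y x := by
  subst hy
  haveI : NeZero n := ⟨by omega⟩
  -- basic numeric facts
  have hσ0 : (0:ℝ) < σ := by linarith
  have hsqrt_pos : 0 < Real.sqrt σ := Real.sqrt_pos.mpr hσ0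
  have hsq : Real.sqrt σ * Real.sqrt σ = σ := Real.mul_self_sqrt (le_of_lt hσ0)
  have hsqrt_le : Real.sqrt σ ≤ σ := by nlinarith [sq_nonneg (Real.sqrt σ - 1)]
  have hnR : (3:ℝ) ≤ (n:ℝ) := by exact_mod_cast hn
  set M : ℝ := 1/3 * min (n:ℝ) (Real.sqrt σ) with hMdef
  have hMpos : 0 < M := by
    have : (0:ℝ) < min (n:ℝ) (Real.sqrt σ) := lt_min (by linarith) hsqrt_pos
    rw [hMdef]; linarith
  have hMn : 3 * M ≤ (n:ℝ) := by
    have := min_le_left (n:ℝ) (Real.sqrt σ); rw [hMdef]; linarith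
  have hMs : 3 * M ≤ Real.sqrt σ := by
    have := min_le_right (n:ℝ) (Real.sqrt σ); rw [hMdef]; linarith
  -- group sizes
  set b : ℕ := ⌈M/2⌉₊ with hbdef
  have hb_ge : M/2 ≤ (b:ℝ) := Nat.le_ceil _
  have hb_lt : (b:ℝ) < M/2 + 1 := by
    have := Nat.ceil_lt_add_one (a := M/2) (by positivity)
    exact_mod_cast this
  have hb_pos : 1 ≤ b := by
    rw [hbdef]
    exact Nat.one_le_iff_ne_zero.mpr (Nat.pos_iff_ne_zero.mp (Nat.ceil_pos.mpr (by positivity)))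
  have hbn : b + 2 ≤ n := by
    have h1 : (b:ℝ) + 1 < (n:ℝ) := by nlinarith
    have h2 : b + 1 < n := by exact_mod_cast h1
    -- need b + 2 ≤ n, i.e. b + 1 < n
    omega
  have hacast : ((n - 1 - b : ℕ):ℝ) = (n:ℝ) - 1 - (b:ℝ) := by
    have hh : (n - 1 - b) + (b + 1) = n := by omega
    have := congrArg (fun t : ℕ => (t : ℝ)) hh
    push_cast at this
    linarith
  have ha_ge : M/2 ≤ ((n - 1 - b : ℕ):ℝ) := by
    rw [hacast]; nlinarith
  have ha_pos : 1 ≤ ((n - 1 - b : ℕ):ℝ) := by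
    rw [hacast]
    -- since b + 2 ≤ n
    have : ((b:ℝ) + 2) ≤ (n:ℝ) := by exact_mod_cast hbn
    linarith
  -- profiles and locations
  set P1 : Fin n → Fin 4 := fun i => if i = 0 then 1 else if (i:ℕ) ≤ b then 2 else 3 with hP1
  set P2 : Fin n → Fin 4 := Function.update P1 0 0 with hP2
  set x1 : Fin n → ℝ := fun i => if i = 0 then 1/2 else if (i:ℕ) ≤ b then 1 else 2 with hx1
  set x2 : Fin n → ℝ := fun i => if i = 0 then -σ+2 else if (i:ℕ) ≤ b then 1 else 2 with hx2
  clear_value M b P1 P2 x1 x2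
  have hx1_0 : x1 0 = 1/2 := by rw [hx1]; simp
  have hx2_0 : x2 0 = -σ+2 := by rw [hx2]; simp
  -- OPT generic facts
  have hOPTle : ∀ (k l : Fin 4), k ≠ l → ∀ x : Fin n → ℝ,
      OPT (![-σ+2,0,1,2]) x ≤ socialCost (![-σ+2,0,1,2]) k l x := by
    intro k l hkl x
    apply csInf_le
    · refine ⟨0, fun c hc => ?_⟩
      obtain ⟨k', l', _, rfl⟩ := hc
      exact socialCost_nonneg' _ _ _ _
    · exact ⟨k, l, hkl, rfl⟩
  have hOPTge : ∀ (x : Fin n → ℝ) (c : ℝ),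
      (∀ k l : Fin 4, k ≠ l → c ≤ socialCost (![-σ+2,0,1,2]) k l x) →
      c ≤ OPT (![-σ+2,0,1,2]) x := by
    intro x c h
    refine le_csInf ⟨socialCost (![-σ+2,0,1,2]) 0 1 x, ⟨0, 1, by decide, rfl⟩⟩ ?_
    rintro d ⟨k, l, hkl, rfl⟩
    exact h k l hkl
  -- consistency of (P1, x1)
  have hcons1 : Consistent (![-σ+2,0,1,2]) P1 x1 := by
    intro i k
    by_cases h0 : i = 0
    · subst h0
      rw [hx1_0]
      have : P1 0 = 1 := by simp [hP1]
      rw [this, e_half1]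
      exact d_half hσ k
    · by_cases hib : (i:ℕ) ≤ b
      · have hx : x1 i = 1 := by rw [hx1]; simp [h0, hib]
        have hp : P1 i = 2 := by rw [hP1]; simp [h0, hib]
        rw [hx, hp, e_one2]
        exact dist_nonneg
      · have hx : x1 i = 2 := by rw [hx1]; simp [h0, hib]
        have hp : P1 i = 3 := by rw [hP1]; simp [h0, hib]
        rw [hx, hp, e_two3]
        exact dist_nonneg
  -- consistency of (P2, x2)
  have hP2e : ∀ i : Fin n, P2 i = if i = 0 then 0 else P1 i := by
    intro i; rw [hP2, Function.update_apply]
  have hcons2 : Consistent (![-σ+2,0,1,2]) P2 x2 := by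
    intro i k
    by_cases h0 : i = 0
    · subst h0
      rw [hx2_0]
      have : P2 0 = 0 := by rw [hP2e 0]; simp
      rw [this, e_A0]
      exact dist_nonneg
    · have hp12 : P2 i = P1 i := by rw [hP2e, if_neg h0]
      by_cases hib : (i:ℕ) ≤ b
      · have hx : x2 i = 1 := by rw [hx2]; simp [h0, hib]
        have hp : P1 i = 2 := by rw [hP1]; simp [h0, hib]
        rw [hx, hp12, hp, e_one2]
        exact dist_nonneg
      · have hx : x2 i = 2 := by rw [hx2]; simp [h0, hib]
        have hp : P1 i = 3 := by rw [hP1]; simp [h0, hib]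
        rw [hx, hp12, hp, e_two3]
        exact dist_nonneg
  -- OPT at x1 is exactly 1/2
  have hSC23x1 : socialCost (![-σ+2,0,1,2]) 2 3 x1 = 1/2 := by
    unfold socialCost
    have hpt : ∀ i : Fin n, pairCost (![-σ+2,0,1,2]) 2 3 (x1 i)
        = if i = 0 then 1/2 else if (i:ℕ) ≤ b then 0 else 0 := by
      intro i
      by_cases h0 : i = 0
      · rw [if_pos h0, h0, hx1_0, pc23_half hσ]
      · by_cases hib : (i:ℕ) ≤ b
        · have hx : x1 i = 1 := by rw [hx1]; simp [h0, hib]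
          rw [if_neg h0, if_pos hib, hx, pc23_one hσ]
        · have hx : x1 i = 2 := by rw [hx1]; simp [h0, hib]
          rw [if_neg h0, if_neg hib, hx, pc23_two hσ]
    rw [Finset.sum_congr rfl (fun i _ => hpt i), sum_ite_classes b (by omega)]
    ring
  have hOx1_le : OPT (![-σ+2,0,1,2]) x1 ≤ 1/2 := by
    have := hOPTle 2 3 (by decide) x1
    rw [hSC23x1] at this
    exact this
  have hOx1_ge : 1/2 ≤ OPT (![-σ+2,0,1,2]) x1 := by
    apply hOPTge
    intro k l hkl
    have h0 : (1:ℝ)/2 ≤ pairCost (![-σ+2,0,1,2]) k l (x1 0) := by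
      rw [hx1_0]
      exact le_min (d_half hσ k) (d_half hσ l)
    exact le_trans h0 (pairCost_le_socialCost (![-σ+2,0,1,2]) k l x1 0)
  have hOx1_pos : 0 < OPT (![-σ+2,0,1,2]) x1 := by linarith
  -- main case analysis
  by_cases hC : ((f P1).1 = 2 ∨ (f P1).2 = 2)
  · by_cases hD : ((f P1).1 = 3 ∨ (f P1).2 = 3)
    · -- f P1 = {2,3}; use SP to pin down f P2, then attack with x2
      have hpair : ((f P1).1 = 2 ∧ (f P1).2 = 3) ∨ ((f P1).1 = 3 ∧ (f P1).2 = 2) := by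
        rcases hC with hc|hc <;> rcases hD with hd|hd
        · exact absurd (hc.symm.trans hd) (by decide)
        · exact Or.inl ⟨hc, hd⟩
        · exact Or.inr ⟨hd, hc⟩
        · exact absurd (hc.symm.trans hd) (by decide)
      have hm0 : ∀ k : Fin 4, dist (1-σ/2) ((![-σ+2,0,1,2]) 0) ≤ dist (1-σ/2) ((![-σ+2,0,1,2]) k) := by
        intro k
        rw [e_m0 hσ]
        rcases fin4cases k with rfl|rfl|rfl|rfl
        · rw [e_m0 hσ]
        · rw [e_m1 hσ]
        · rw [e_m2 hσ]; linarith
        · rw [e_m3 hσ]; linarith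
      have hm1 : ∀ k : Fin 4, dist (1-σ/2) ((![-σ+2,0,1,2]) 1) ≤ dist (1-σ/2) ((![-σ+2,0,1,2]) k) := by
        intro k
        rw [e_m1 hσ]
        rcases fin4cases k with rfl|rfl|rfl|rfl
        · rw [e_m0 hσ]
        · rw [e_m1 hσ]
        · rw [e_m2 hσ]; linarith
        · rw [e_m3 hσ]; linarith
      have hup1 : Function.update P1 0 1 = P1 := by
        funext i
        rw [Function.update_apply]
        by_cases h0 : i = 0
        · subst h0; simp [hP1]
        · rw [if_neg h0]
      have hup0 : Function.update P1 0 0 = P2 := hP2.symm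
      have hsp1 := hsp 0 (1-σ/2) P1 0 1 hm0
      have hsp2 := hsp 0 (1-σ/2) P1 1 0 hm1
      rw [hup0, hup1] at hsp1 hsp2
      have hcostP1 : pairCost (![-σ+2,0,1,2]) (f P1).1 (f P1).2 (1-σ/2) = σ/2 := by
        rcases hpair with ⟨h1, h2⟩|⟨h1, h2⟩
        · rw [h1, h2, pc23_m hσ]
        · rw [h1, h2, pairCost_comm' (![-σ+2,0,1,2]) 3 2 (1-σ/2), pc23_m hσ]
      have heq : pairCost (![-σ+2,0,1,2]) (f P2).1 (f P2).2 (1-σ/2) = σ/2 := by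
        rw [hcostP1] at hsp1 hsp2
        exact le_antisymm hsp1 hsp2
      have hno : ∀ K : Fin 4, (K = (f P2).1 ∨ K = (f P2).2) → K ≠ 0 ∧ K ≠ 1 := by
        intro K hK
        constructor <;> intro hK0 <;>
        · subst hK0
          have hle : pairCost (![-σ+2,0,1,2]) (f P2).1 (f P2).2 (1-σ/2) ≤ σ/2 - 1 := by
            rcases hK with h|h
            · rw [pairCost, ← h]
              first
                | (rw [e_m0 hσ]; exact min_le_left _ _)
                | (rw [e_m1 hσ]; exact min_le_left _ _)
            · rw [pairCost, ← h]
              first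
                | (rw [e_m0 hσ]; exact min_le_right _ _)
                | (rw [e_m1 hσ]; exact min_le_right _ _)
          rw [heq] at hle
          linarith
      have hp2 : ((f P2).1 = 2 ∧ (f P2).2 = 3) ∨ ((f P2).1 = 3 ∧ (f P2).2 = 2) := by
        have h1 := hno (f P2).1 (Or.inl rfl)
        have h2 := hno (f P2).2 (Or.inr rfl)
        have hv := hvalid P2
        have key : ∀ u v : Fin 4, u ≠ 0 → u ≠ 1 → v ≠ 0 → v ≠ 1 → u ≠ v →
            (u = 2 ∧ v = 3) ∨ (u = 3 ∧ v = 2) := by decide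
        exact key _ _ h1.1 h1.2 h2.1 h2.2 hv
      refine ⟨P2, x2, hcons2, ?_⟩
      -- social cost of {2,3} at x2 is σ - 1
      have hSC23x2 : socialCost (![-σ+2,0,1,2]) 2 3 x2 = σ - 1 := by
        unfold socialCost
        have hpt : ∀ i : Fin n, pairCost (![-σ+2,0,1,2]) 2 3 (x2 i)
            = if i = 0 then σ-1 else if (i:ℕ) ≤ b then 0 else 0 := by
          intro i
          by_cases h0 : i = 0
          · rw [if_pos h0, h0, hx2_0, pc23_A hσ]
          · by_cases hib : (i:ℕ) ≤ b
            · have hx : x2 i = 1 := by rw [hx2]; simp [h0, hib]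
              rw [if_neg h0, if_pos hib, hx, pc23_one hσ]
            · have hx : x2 i = 2 := by rw [hx2]; simp [h0, hib]
              rw [if_neg h0, if_neg hib, hx, pc23_two hσ]
        rw [Finset.sum_congr rfl (fun i _ => hpt i), sum_ite_classes b (by omega)]
        ring
      have hSC : socialCost (![-σ+2,0,1,2]) (f P2).1 (f P2).2 x2 = σ - 1 := by
        rcases hp2 with ⟨h1, h2⟩|⟨h1, h2⟩
        · rw [h1, h2, hSC23x2]
        · rw [h1, h2, socialCost_comm', hSC23x2]
      -- OPT at x2 : between 1 and b
      have hSC03x2 : socialCost (![-σ+2,0,1,2]) 0 3 x2 = (b:ℝ) := by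
        unfold socialCost
        have hpt : ∀ i : Fin n, pairCost (![-σ+2,0,1,2]) 0 3 (x2 i)
            = if i = 0 then 0 else if (i:ℕ) ≤ b then 1 else 0 := by
          intro i
          by_cases h0 : i = 0
          · rw [if_pos h0, h0, hx2_0, pc03_A hσ]
          · by_cases hib : (i:ℕ) ≤ b
            · have hx : x2 i = 1 := by rw [hx2]; simp [h0, hib]
              rw [if_neg h0, if_pos hib, hx, pc03_one hσ]
            · have hx : x2 i = 2 := by rw [hx2]; simp [h0, hib]
              rw [if_neg h0, if_neg hib, hx, pc03_two hσ]
        rw [Finset.sum_congr rfl (fun i _ => hpt i), sum_ite_classes b (by omega)]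
        ring
      have hOx2_le : OPT (![-σ+2,0,1,2]) x2 ≤ (b:ℝ) := by
        have := hOPTle 0 3 (by decide) x2
        rw [hSC03x2] at this
        exact this
      have hOx2_ge : 1 ≤ OPT (![-σ+2,0,1,2]) x2 := by
        apply hOPTge
        intro k l hkl
        by_cases hk0 : k = 0
        · -- pair contains candidate 0
          by_cases h2 : (k = 2 ∨ l = 2)
          · -- then pair misses 3 : witness the D-voter at 2
            have hkl3 : k ≠ 3 ∧ l ≠ 3 := by
              have key : ∀ u v : Fin 4, u ≠ v → u = 0 → (u = 2 ∨ v = 2) →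
                  (u ≠ 3 ∧ v ≠ 3) := by decide
              exact key k l hkl hk0 h2
            have hwit : (1:ℝ) ≤ pairCost (![-σ+2,0,1,2]) k l (x2 ⟨b+1, by omega⟩) := by
              have hx : x2 ⟨b+1, by omega⟩ = 2 := by
                rw [hx2]
                have hne : (⟨b+1, by omega⟩ : Fin n) ≠ 0 := by
                  simp [Fin.ext_iff]
                simp [hne]
              rw [hx]
              exact le_min (d_two hσ hkl3.1) (d_two hσ hkl3.2)
            exact le_trans hwit (pairCost_le_socialCost (![-σ+2,0,1,2]) k l x2 ⟨b+1, by omega⟩)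
          · -- pair misses 2 : witness the C-voter at 1
            push_neg at h2
            have hwit : (1:ℝ) ≤ pairCost (![-σ+2,0,1,2]) k l (x2 ⟨1, by omega⟩) := by
              have hx : x2 ⟨1, by omega⟩ = 1 := by
                rw [hx2]
                have hne : (⟨1, by omega⟩ : Fin n) ≠ 0 := by simp [Fin.ext_iff]
                have hle : ((⟨1, by omega⟩ : Fin n) : ℕ) ≤ b := by
                  simpa using hb_pos
                simp [hne, hle]
              rw [hx]
              exact le_min (d_one hσ h2.1) (d_one hσ h2.2)
            exact le_trans hwit (pairCost_le_socialCost (![-σ+2,0,1,2]) k l x2 ⟨1, by omega⟩)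
        · by_cases hl0 : l = 0
          · -- symmetric: l = 0
            by_cases h2 : (k = 2 ∨ l = 2)
            · have hkl3 : k ≠ 3 ∧ l ≠ 3 := by
                have key : ∀ u v : Fin 4, u ≠ v → v = 0 → (u = 2 ∨ v = 2) →
                    (u ≠ 3 ∧ v ≠ 3) := by decide
                exact key k l hkl hl0 h2
              have hwit : (1:ℝ) ≤ pairCost (![-σ+2,0,1,2]) k l (x2 ⟨b+1, by omega⟩) := by
                have hx : x2 ⟨b+1, by omega⟩ = 2 := by
                  rw [hx2]
                  have hne : (⟨b+1, by omega⟩ : Fin n) ≠ 0 := by simp [Fin.ext_iff]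
                  simp [hne]
                rw [hx]
                exact le_min (d_two hσ hkl3.1) (d_two hσ hkl3.2)
              exact le_trans hwit (pairCost_le_socialCost (![-σ+2,0,1,2]) k l x2 ⟨b+1, by omega⟩)
            · push_neg at h2
              have hwit : (1:ℝ) ≤ pairCost (![-σ+2,0,1,2]) k l (x2 ⟨1, by omega⟩) := by
                have hx : x2 ⟨1, by omega⟩ = 1 := by
                  rw [hx2]
                  have hne : (⟨1, by omega⟩ : Fin n) ≠ 0 := by simp [Fin.ext_iff]
                  have hle : ((⟨1, by omega⟩ : Fin n) : ℕ) ≤ b := by simpa using hb_pos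
                  simp [hne, hle]
                rw [hx]
                exact le_min (d_one hσ h2.1) (d_one hσ h2.2)
              exact le_trans hwit (pairCost_le_socialCost (![-σ+2,0,1,2]) k l x2 ⟨1, by omega⟩)
          · -- neither winner is 0 : witness voter 0 at -σ+2
            have hwit : (1:ℝ) ≤ pairCost (![-σ+2,0,1,2]) k l (x2 0) := by
              rw [hx2_0]
              exact le_min (d_A hσ hk0) (d_A hσ hl0)
            exact le_trans hwit (pairCost_le_socialCost (![-σ+2,0,1,2]) k l x2 0)
      have hOx2_pos : 0 < OPT (![-σ+2,0,1,2]) x2 := by linarith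
      rw [hSC, le_div_iff₀ hOx2_pos]
      have step1 : M * OPT (![-σ+2,0,1,2]) x2 ≤ M * (b:ℝ) :=
        mul_le_mul_of_nonneg_left hOx2_le (le_of_lt hMpos)
      have step2 : M * (b:ℝ) ≤ M * (M/2 + 1) :=
        mul_le_mul_of_nonneg_left (le_of_lt hb_lt) (le_of_lt hMpos)
      have step3 : M * (M/2 + 1) ≤ σ - 1 := by
        nlinarith [hsq, hMs, hsqrt_le, hσ, hMpos, hnR]
      linarith only [step1, step2, step3]
    · -- f P1 misses candidate 3 : attack with x1, D-voters pay ≥ 1 each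
      push_neg at hD
      refine ⟨P1, x1, hcons1, ?_⟩
      have hSClb : 1/2 + (b:ℝ) * 0 + ((n-1-b:ℕ):ℝ) * 1 ≤
          socialCost (![-σ+2,0,1,2]) (f P1).1 (f P1).2 x1 := by
        unfold socialCost
        rw [← sum_ite_classes b (by omega)]
        apply Finset.sum_le_sum
        intro i _
        by_cases h0 : i = 0
        · rw [if_pos h0, h0, hx1_0]
          exact le_min (d_half hσ _) (d_half hσ _)
        · by_cases hib : (i:ℕ) ≤ b
          · rw [if_neg h0, if_pos hib]
            exact pairCost_nonneg' _ _ _ _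
          · rw [if_neg h0, if_neg hib]
            have hx : x1 i = 2 := by rw [hx1]; simp [h0, hib]
            rw [hx]
            exact le_min (d_two hσ hD.1) (d_two hσ hD.2)
      rw [le_div_iff₀ hOx1_pos]
      have step1 : M * OPT (![-σ+2,0,1,2]) x1 ≤ M * (1/2) :=
        mul_le_mul_of_nonneg_left hOx1_le (le_of_lt hMpos)
      have step2 : 1/2 + (b:ℝ) * 0 + ((n-1-b:ℕ):ℝ) * 1 ≥ 1/2 + M/2 := by
        linarith only [ha_ge]
      linarith only [step1, step2, hSClb, hMpos]
  · -- f P1 misses candidate 2 : attack with x1, C-voters pay ≥ 1 each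
    push_neg at hC
    refine ⟨P1, x1, hcons1, ?_⟩
    have hSClb : 1/2 + (b:ℝ) * 1 + ((n-1-b:ℕ):ℝ) * 0 ≤
        socialCost (![-σ+2,0,1,2]) (f P1).1 (f P1).2 x1 := by
      unfold socialCost
      rw [← sum_ite_classes b (by omega)]
      apply Finset.sum_le_sum
      intro i _
      by_cases h0 : i = 0
      · rw [if_pos h0, h0, hx1_0]
        exact le_min (d_half hσ _) (d_half hσ _)
      · by_cases hib : (i:ℕ) ≤ b
        · rw [if_neg h0, if_pos hib]
          have hx : x1 i = 1 := by rw [hx1]; simp [h0, hib]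
          rw [hx]
          exact le_min (d_one hσ hC.1) (d_one hσ hC.2)
        · rw [if_neg h0, if_neg hib]
          exact pairCost_nonneg' _ _ _ _
    rw [le_div_iff₀ hOx1_pos]
    have step1 : M * OPT (![-σ+2,0,1,2]) x1 ≤ M * (1/2) :=
      mul_le_mul_of_nonneg_left hOx1_le (le_of_lt hMpos)
    have step2 : 1/2 + (b:ℝ) * 1 + ((n-1-b:ℕ):ℝ) * 0 ≥ 1/2 + M/2 := by
      linarith only [hb_ge]
    linarith only [step1, step2, hSClb, hMpos]
end

section
/- For any m ≥ 2 candidates y_1 < y_2 < … < y_m on the real line and any number n of voters, the Two-Extremes mechanism is a strategy-proof deterministic two-winner scv mechanism. -/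
open Finset

/-- The Two-Extremes mechanism on the real line: if at least two distinct
candidates receive votes, output the leftmost and the rightmost candidates
receiving a vote (candidates are indexed in increasing order of location);
if all voters vote for the single candidate `i`, output `(0, i)` when `i ≠ 0`
and `(0, 1)` when `i = 0`. -/
noncomputable def twoExtremes {n m : ℕ} (hm : 2 ≤ m) (a : Fin n → Fin m) :
    Fin m × Fin m :=
  if h : ∃ j j' : Fin n, a j ≠ a j' then
    ((univ.image a).min' ⟨a h.choose, mem_image_of_mem a (mem_univ h.choose)⟩,
     (univ.image a).max' ⟨a h.choose, mem_image_of_mem a (mem_univ h.choose)⟩)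
  else if h' : ∃ j : Fin n, a j ≠ ⟨0, by omega⟩ then
    (⟨0, by omega⟩, a h'.choose)
  else (⟨0, by omega⟩, ⟨1, by omega⟩)


lemma abs_key (A B C x : ℝ) (hAB : A ≤ B) (hBC : B ≤ C)
    (h1 : |x - C| ≤ |x - B|) (h2 : |x - C| ≤ |x - A|) : |x - B| ≤ |x - A| := by
  rcases abs_cases (x - A) with ⟨e1, f1⟩ | ⟨e1, f1⟩ <;>
  rcases abs_cases (x - B) with ⟨e2, f2⟩ | ⟨e2, f2⟩ <;>
  rcases abs_cases (x - C) with ⟨e3, f3⟩ | ⟨e3, f3⟩ <;>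
  linarith

lemma abs_key' (A B C x : ℝ) (hAB : B ≤ A) (hBC : C ≤ B)
    (h1 : |x - C| ≤ |x - B|) (h2 : |x - C| ≤ |x - A|) : |x - B| ≤ |x - A| := by
  rcases abs_cases (x - A) with ⟨e1, f1⟩ | ⟨e1, f1⟩ <;>
  rcases abs_cases (x - B) with ⟨e2, f2⟩ | ⟨e2, f2⟩ <;>
  rcases abs_cases (x - C) with ⟨e3, f3⟩ | ⟨e3, f3⟩ <;>
  linarith

lemma dist_mono_left {m : ℕ} {y : Fin m → ℝ} (hy : Monotone y) {xi : ℝ} {astar k l : Fin m}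
    (h : ∀ j, dist xi (y astar) ≤ dist xi (y j)) (hkl : k ≤ l) (hla : l ≤ astar) :
    dist xi (y l) ≤ dist xi (y k) := by
  have h1 := h l; have h2 := h k
  simp only [Real.dist_eq] at h1 h2 ⊢
  exact abs_key (y k) (y l) (y astar) xi (hy hkl) (hy hla) h1 h2

lemma dist_mono_right {m : ℕ} {y : Fin m → ℝ} (hy : Monotone y) {xi : ℝ} {astar k l : Fin m}
    (h : ∀ j, dist xi (y astar) ≤ dist xi (y j)) (hlk : l ≤ k) (hal : astar ≤ l) :
    dist xi (y l) ≤ dist xi (y k) := by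
  have h1 := h l; have h2 := h k
  simp only [Real.dist_eq] at h1 h2 ⊢
  exact abs_key' (y k) (y l) (y astar) xi (hy hlk) (hy hal) h1 h2

/-- For candidates `y 0 < y 1 < ... < y (m-1)` on the real line, the Two-Extremes
mechanism is a strategy-proof deterministic two-winner scv mechanism. -/
theorem stmt4 {m n : ℕ} (hm : 2 ≤ m) (y : Fin m → ℝ) (hy : StrictMono y) :
    (∀ a : Fin n → Fin m, (twoExtremes hm a).1 ≠ (twoExtremes hm a).2) ∧
      DetSP y (twoExtremes (n := n) hm) := by
  constructor
  · intro a
    unfold twoExtremes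
    split_ifs with h h'
    · obtain ⟨j, j', hjj⟩ := h
      exact ne_of_lt (Finset.min'_lt_max' _ (mem_image_of_mem a (mem_univ j))
        (mem_image_of_mem a (mem_univ j')) hjj)
    · exact Ne.symm h'.choose_spec
    · simp [Fin.ext_iff]
  · intro i xi a astar ai' hstar
    set b := Function.update a i astar with hb
    set b' := Function.update a i ai' with hb'
    have hbi : b i = astar := Function.update_self i astar a
    have lower : ∀ k l : Fin m, dist xi (y astar) ≤ pairCost y k l xi :=
      fun k l => le_min (hstar k) (hstar l)
    by_cases hc : ∃ j j' : Fin n, b j ≠ b j'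
    · -- b nonconstant
      have hne : (univ.image b).Nonempty := ⟨astar, mem_image.2 ⟨i, mem_univ i, hbi⟩⟩
      set L := (univ.image b).min' hne with hL
      set R := (univ.image b).max' hne with hR
      have hout : twoExtremes hm b = (L, R) := by
        unfold twoExtremes; rw [dif_pos hc]
      have haT : astar ∈ univ.image b := mem_image.2 ⟨i, mem_univ i, hbi⟩
      have hLa : L ≤ astar := min'_le _ _ haT
      have haR : astar ≤ R := le_max' _ _ haT
      rw [hout]
      rcases eq_or_lt_of_le hLa with hEq | hLlt
      · refine le_trans ?_ (lower _ _)
        calc pairCost y L R xi ≤ dist xi (y L) := min_le_left _ _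
          _ = dist xi (y astar) := by rw [hEq]
      rcases eq_or_lt_of_le haR with hEq | hRlt
      · refine le_trans ?_ (lower _ _)
        calc pairCost y L R xi ≤ dist xi (y R) := min_le_right _ _
          _ = dist xi (y astar) := by rw [hEq]
      · -- L < astar < R
        have hsub : ∀ k, k ∈ univ.image b → k ≠ astar → k ∈ univ.image b' := by
          intro k hk hka
          obtain ⟨j, _, hj⟩ := mem_image.1 hk
          have hji : j ≠ i := by
            rintro rfl
            rw [hbi] at hj
            exact hka hj.symm
          refine mem_image.2 ⟨j, mem_univ j, ?_⟩
          rw [hb', Function.update_of_ne hji, ← hj, hb, Function.update_of_ne hji]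
        have hL' : L ∈ univ.image b' := hsub L (min'_mem _ _) (ne_of_lt hLlt)
        have hR' : R ∈ univ.image b' := hsub R (max'_mem _ _) (ne_of_gt hRlt)
        have hcb' : ∃ j j' : Fin n, b' j ≠ b' j' := by
          obtain ⟨j1, _, hj1⟩ := mem_image.1 hL'
          obtain ⟨j2, _, hj2⟩ := mem_image.1 hR'
          exact ⟨j1, j2, by rw [hj1, hj2]; exact ne_of_lt (hLlt.trans hRlt)⟩
        have hne' : (univ.image b').Nonempty := ⟨L, hL'⟩
        have hout' : twoExtremes hm b' =
            ((univ.image b').min' hne', (univ.image b').max' hne') := by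
          unfold twoExtremes; rw [dif_pos hcb']
        rw [hout']
        have h1 : (univ.image b').min' hne' ≤ L := min'_le _ _ hL'
        have h2 : R ≤ (univ.image b').max' hne' := le_max' _ _ hR'
        have dL : dist xi (y L) ≤ dist xi (y ((univ.image b').min' hne')) :=
          dist_mono_left hy.monotone hstar h1 hLa
        have dR : dist xi (y R) ≤ dist xi (y ((univ.image b').max' hne')) :=
          dist_mono_right hy.monotone hstar h2 haR
        exact min_le_min dL dR
    · -- b constant, everyone votes astar
      push_neg at hc
      have hall : ∀ j, b j = astar := fun j => (hc j i).trans hbi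
      refine le_trans ?_ (lower _ _)
      have hc' : ¬∃ j j' : Fin n, b j ≠ b j' := by push_neg; exact hc
      unfold twoExtremes
      rw [dif_neg hc']
      by_cases h0 : astar = (⟨0, by omega⟩ : Fin m)
      · have hno : ¬∃ j : Fin n, b j ≠ ⟨0, by omega⟩ := by
          push_neg; intro j; rw [hall j, h0]
        rw [dif_neg hno]
        rw [h0]
        exact min_le_left _ _
      · have hyes : ∃ j : Fin n, b j ≠ (⟨0, by omega⟩ : Fin m) := ⟨i, by rw [hbi]; exact h0⟩
        rw [dif_pos hyes]
        simp only [pairCost, hall]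
        exact min_le_right _ _
end

section
/- For any m ≥ 2 candidates y_1 < y_2 < … < y_m on the real line and any number n ≥ 2 of voters, the Two-Extremes mechanism has distortion at most 2n − 3: for every action profile a and every location profile x consistent with a, SC(f(a), x) ≤ (2n − 3)·OPT(x). -/
open Finset

lemma opt_spec {m n : ℕ} (hm : 2 ≤ m) (y : Fin m → ℝ) (x : Fin n → ℝ) :
    ∃ w1 w2 : Fin m, w1 ≠ w2 ∧ OPT y x = socialCost y w1 w2 x ∧
      ∀ k l : Fin m, k ≠ l → OPT y x ≤ socialCost y k l x := by
  have hfin : {c : ℝ | ∃ k l : Fin m, k ≠ l ∧ c = socialCost y k l x}.Finite := by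
    apply Set.Finite.subset
      (Set.finite_range (fun p : Fin m × Fin m => socialCost y p.1 p.2 x))
    rintro c ⟨k, l, -, rfl⟩; exact ⟨(k, l), rfl⟩
  have hne : {c : ℝ | ∃ k l : Fin m, k ≠ l ∧ c = socialCost y k l x}.Nonempty :=
    ⟨socialCost y ⟨0, by omega⟩ ⟨1, by omega⟩ x,
      ⟨0, by omega⟩, ⟨1, by omega⟩, by simp [Fin.ext_iff], rfl⟩
  have hmem := hne.csInf_mem hfin
  obtain ⟨w1, w2, hw, heq⟩ := hmem
  exact ⟨w1, w2, hw, heq, fun k l hkl => csInf_le hfin.bddBelow ⟨k, l, hkl, rfl⟩⟩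

/-- For candidates `y 0 < y 1 < ... < y (m-1)` on the real line and `n ≥ 2`
voters, the Two-Extremes mechanism has distortion at most `2n - 3`. -/
theorem stmt5 {m n : ℕ} (hm : 2 ≤ m) (hn : 2 ≤ n) (y : Fin m → ℝ)
    (hy : StrictMono y) (a : Fin n → Fin m) (x : Fin n → ℝ)
    (hcons : Consistent y a x) :
    socialCost y (twoExtremes hm a).1 (twoExtremes hm a).2 x ≤
      (2 * (n : ℝ) - 3) * OPT y x := by
  obtain ⟨w1, w2, hw12, hOPTeq, hOPTle⟩ := opt_spec hm y x
  have hc_nonneg : ∀ i, 0 ≤ pairCost y w1 w2 (x i) := fun i =>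
    le_min dist_nonneg dist_nonneg
  have hOPT0 : 0 ≤ OPT y x := by
    rw [hOPTeq]; exact Finset.sum_nonneg fun i _ => hc_nonneg i
  have hd : ∀ i, dist (x i) (y (a i)) ≤ pairCost y w1 w2 (x i) := fun i =>
    le_min (hcons i w1) (hcons i w2)
  have hcoef : (1 : ℝ) ≤ 2 * (n : ℝ) - 3 := by
    have : (2 : ℝ) ≤ (n : ℝ) := by exact_mod_cast hn
    linarith
  by_cases h : ∃ j j' : Fin n, a j ≠ a j'
  · -- main case
    obtain ⟨j0, j1, hjne⟩ := h
    have h : ∃ j j' : Fin n, a j ≠ a j' := ⟨j0, j1, hjne⟩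
    have key : ∀ (p : (univ.image a).Nonempty),
        socialCost y ((univ.image a).min' p) ((univ.image a).max' p) x ≤
          (2 * (n : ℝ) - 3) * OPT y x := by
      intro p
      set T := univ.image a with hT
      set L := T.min' p with hL
      set R := T.max' p with hR
      obtain ⟨u, -, hu⟩ := Finset.mem_image.1 (T.min'_mem p)
      obtain ⟨v, -, hv⟩ := Finset.mem_image.1 (T.max'_mem p)
      have hLltR : L < R :=
        Finset.min'_lt_max' T (mem_image_of_mem a (mem_univ j0))
          (mem_image_of_mem a (mem_univ j1)) hjne
      have huv : u ≠ v := by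
        intro e
        apply ne_of_lt hLltR
        rw [hL, hR, ← hu, ← hv, e]
      have hLai : ∀ i, y L ≤ y (a i) := fun i =>
        hy.monotone (T.min'_le _ (mem_image_of_mem a (mem_univ i)))
      have haiR : ∀ i, y (a i) ≤ y R := fun i =>
        hy.monotone (T.le_max' _ (mem_image_of_mem a (mem_univ i)))
      have serve : ∀ i : Fin n, ∃ w : Fin m, (w = w1 ∨ w = w2) ∧
          pairCost y w1 w2 (x i) = dist (x i) (y w) := by
        intro i
        rcases min_cases (dist (x i) (y w1)) (dist (x i) (y w2)) with
          ⟨hmin, -⟩ | ⟨hmin, -⟩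
        exacts [⟨w1, Or.inl rfl, hmin⟩, ⟨w2, Or.inr rfl, hmin⟩]
      obtain ⟨wu, hwuo, hwu⟩ := serve u
      obtain ⟨wv, hwvo, hwv⟩ := serve v
      have hduL : dist (x u) (y L) ≤ pairCost y w1 w2 (x u) := by
        have h0 := hd u; rwa [hu, ← hL] at h0
      have hdvR : dist (x v) (y R) ≤ pairCost y w1 w2 (x v) := by
        have h0 := hd v; rwa [hv, ← hR] at h0
      have hLwu : dist (y L) (y wu) ≤ 2 * pairCost y w1 w2 (x u) := by
        calc dist (y L) (y wu) ≤ dist (y L) (x u) + dist (x u) (y wu) :=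
              dist_triangle _ _ _
          _ = dist (x u) (y L) + dist (x u) (y wu) := by rw [dist_comm]
          _ ≤ pairCost y w1 w2 (x u) + pairCost y w1 w2 (x u) := by
              rw [← hwu] at *; exact add_le_add hduL le_rfl
          _ = 2 * pairCost y w1 w2 (x u) := by ring
      have hRwv : dist (y R) (y wv) ≤ 2 * pairCost y w1 w2 (x v) := by
        calc dist (y R) (y wv) ≤ dist (y R) (x v) + dist (x v) (y wv) :=
              dist_triangle _ _ _
          _ = dist (x v) (y R) + dist (x v) (y wv) := by rw [dist_comm]
          _ ≤ pairCost y w1 w2 (x v) + pairCost y w1 w2 (x v) := by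
              rw [← hwv] at *; exact add_le_add hdvR le_rfl
          _ = 2 * pairCost y w1 w2 (x v) := by ring
      have hkey : ∀ i, pairCost y L R (x i) ≤ pairCost y w1 w2 (x i) +
          (2 * pairCost y w1 w2 (x u) + 2 * pairCost y w1 w2 (x v)) := by
        intro i
        obtain ⟨wi, hwio, hwi⟩ := serve i
        have hcv0 := hc_nonneg v
        have hcu0 := hc_nonneg u
        by_cases h1 : wi = wu
        · have h5 : pairCost y L R (x i) ≤ dist (x i) (y L) := min_le_left _ _
          have h6 : dist (x i) (y L) ≤ dist (x i) (y wi) + dist (y wi) (y L) :=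
            dist_triangle _ _ _
          have h7 : dist (y wi) (y L) = dist (y L) (y wu) := by
            rw [h1, dist_comm]
          rw [← hwi] at h6
          linarith [hLwu]
        · by_cases h2 : wi = wv
          · have h5 : pairCost y L R (x i) ≤ dist (x i) (y R) := min_le_right _ _
            have h6 : dist (x i) (y R) ≤ dist (x i) (y wi) + dist (y wi) (y R) :=
              dist_triangle _ _ _
            have h7 : dist (y wi) (y R) = dist (y R) (y wv) := by
              rw [h2, dist_comm]
            rw [← hwi] at h6
            linarith [hRwv]
          · have hww : wu = wv := by
              rcases hwio with rfl | rfl <;> rcases hwuo with rfl | rfl <;>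
                rcases hwvo with rfl | rfl <;>
                first
                  | rfl
                  | (exact absurd rfl h1)
                  | (exact absurd rfl h2)
            have hgap : dist (y L) (y R) ≤
                2 * pairCost y w1 w2 (x u) + 2 * pairCost y w1 w2 (x v) := by
              have h3 : dist (y L) (y R) ≤ dist (y L) (y wu) + dist (y wu) (y R) :=
                dist_triangle _ _ _
              have h4 : dist (y wu) (y R) = dist (y R) (y wv) := by
                rw [hww, dist_comm]
              linarith [hLwu, hRwv]
            have h5 : pairCost y L R (x i) ≤ dist (x i) (y L) := min_le_left _ _
            have h6 : dist (x i) (y L) ≤ dist (x i) (y (a i)) + dist (y (a i)) (y L) :=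
              dist_triangle _ _ _
            have h7 : dist (y (a i)) (y L) ≤ dist (y L) (y R) := by
              rw [Real.dist_eq, Real.dist_eq,
                abs_of_nonneg (sub_nonneg.2 (hLai i))]
              have := le_abs_self (y R - y L)
              have h8 : y (a i) - y L ≤ y R - y L := by linarith [haiR i]
              calc y (a i) - y L ≤ y R - y L := h8
                _ ≤ |y R - y L| := le_abs_self _
                _ = |y L - y R| := abs_sub_comm _ _
            linarith [hd i]
      -- summation
      have hmu : pairCost y L R (x u) ≤ pairCost y w1 w2 (x u) :=
        (min_le_left _ _).trans hduL
      have hmv : pairCost y L R (x v) ≤ pairCost y w1 w2 (x v) :=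
        (min_le_right _ _).trans hdvR
      have hsplit : socialCost y L R x =
          ∑ i ∈ univ \ ({u, v} : Finset (Fin n)), pairCost y L R (x i) +
            (pairCost y L R (x u) + pairCost y L R (x v)) := by
        rw [socialCost, ← Finset.sum_sdiff (Finset.subset_univ ({u, v} : Finset (Fin n))),
          Finset.sum_pair huv]
      have hsplit2 : ∑ i ∈ univ \ ({u, v} : Finset (Fin n)), pairCost y w1 w2 (x i) +
            (pairCost y w1 w2 (x u) + pairCost y w1 w2 (x v)) = OPT y x := by
        rw [hOPTeq, socialCost,
          ← Finset.sum_sdiff (Finset.subset_univ ({u, v} : Finset (Fin n))),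
          Finset.sum_pair huv]
      have hcard : ((univ \ ({u, v} : Finset (Fin n))).card : ℝ) = (n : ℝ) - 2 := by
        rw [Finset.card_sdiff_of_subset (subset_univ _), Finset.card_pair huv, card_univ,
          Fintype.card_fin, Nat.cast_sub (by omega)]
        norm_num
      have hsum1 : ∑ i ∈ univ \ ({u, v} : Finset (Fin n)), pairCost y L R (x i) ≤
          ∑ i ∈ univ \ ({u, v} : Finset (Fin n)), pairCost y w1 w2 (x i) +
            ((n : ℝ) - 2) * (2 * pairCost y w1 w2 (x u) + 2 * pairCost y w1 w2 (x v)) := by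
        calc ∑ i ∈ univ \ ({u, v} : Finset (Fin n)), pairCost y L R (x i)
            ≤ ∑ i ∈ univ \ ({u, v} : Finset (Fin n)),
                (pairCost y w1 w2 (x i) +
                  (2 * pairCost y w1 w2 (x u) + 2 * pairCost y w1 w2 (x v))) :=
              Finset.sum_le_sum fun i _ => hkey i
          _ = ∑ i ∈ univ \ ({u, v} : Finset (Fin n)), pairCost y w1 w2 (x i) +
                ((univ \ ({u, v} : Finset (Fin n))).card : ℝ) *
                  (2 * pairCost y w1 w2 (x u) + 2 * pairCost y w1 w2 (x v)) := by
              rw [Finset.sum_add_distrib, Finset.sum_const, nsmul_eq_mul]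
          _ = _ := by rw [hcard]
      have hcuv : pairCost y w1 w2 (x u) + pairCost y w1 w2 (x v) ≤ OPT y x := by
        have h9 := Finset.sum_le_sum_of_subset_of_nonneg
          (Finset.subset_univ ({u, v} : Finset (Fin n)))
          (fun i _ _ => hc_nonneg i)
        rw [Finset.sum_pair huv] at h9
        rw [hOPTeq]; exact h9
      have hn2 : (0 : ℝ) ≤ (n : ℝ) - 2 := by
        have : (2 : ℝ) ≤ (n : ℝ) := by exact_mod_cast hn
        linarith
      have h9 : ((n : ℝ) - 2) * (pairCost y w1 w2 (x u) + pairCost y w1 w2 (x v)) ≤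
          ((n : ℝ) - 2) * OPT y x := mul_le_mul_of_nonneg_left hcuv hn2
      nlinarith [hsplit, hsum1, hsplit2, hmu, hmv, h9]
    simp only [twoExtremes, dif_pos h]
    exact key _
  · push_neg at h
    have hS : socialCost y (twoExtremes hm a).1 (twoExtremes hm a).2 x ≤ OPT y x := by
      have hnot : ¬ ∃ j j' : Fin n, a j ≠ a j' := by push_neg; exact h
      by_cases h' : ∃ j : Fin n, a j ≠ (⟨0, by omega⟩ : Fin m)
      · simp only [twoExtremes, dif_neg hnot, dif_pos h']
        rw [socialCost, hOPTeq, socialCost]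
        apply Finset.sum_le_sum
        intro i _
        have : a h'.choose = a i := h _ _
        calc pairCost y ⟨0, by omega⟩ (a h'.choose) (x i)
            ≤ dist (x i) (y (a h'.choose)) := min_le_right _ _
          _ = dist (x i) (y (a i)) := by rw [this]
          _ ≤ pairCost y w1 w2 (x i) := hd i
      · push_neg at h'
        simp only [twoExtremes, dif_neg hnot, dif_neg (not_exists.mpr fun j => not_not_intro (h' j))]
        rw [socialCost, hOPTeq, socialCost]
        apply Finset.sum_le_sum
        intro i _
        calc pairCost y ⟨0, by omega⟩ ⟨1, by omega⟩ (x i)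
            ≤ dist (x i) (y ⟨0, by omega⟩) := min_le_left _ _
          _ = dist (x i) (y (a i)) := by rw [h' i]
          _ ≤ pairCost y w1 w2 (x i) := hd i
    calc socialCost y (twoExtremes hm a).1 (twoExtremes hm a).2 x ≤ OPT y x := hS
      _ = 1 * OPT y x := (one_mul _).symm
      _ ≤ (2 * (n : ℝ) - 3) * OPT y x := mul_le_mul_of_nonneg_right hcoef hOPT0
end

section
/- Let m ≥ 3, let r > 2 be real, and place m candidates in ℝ^{m−1} by y_i = e_i (the i-th standard basis vector) for 1 ≤ i ≤ m−1 and y_m = (r, r, …, r). Let 1 ≤ w < m−1 and let f be an anonymous strategy-proof randomized w-winner scv mechanism for these candidates and n voters. Then for every subset L of {1, …, m} of size w and any two action profiles a and a' in which every candidate in L receives the same number of votes under a as under a', the probability that L is elected is the same: p_L(a) = p_L(a'). In other words, the probability of a committee being elected depends only on the vote counts of its w members. -/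
/-!
Fix a committee `L` of size `w < m - 1`, so that some basis candidate lies outside `L`. The point
with coordinate `0` along the basis candidates of `L` and `T > 0` along all other axes is at
distance `c₁` from every basis candidate outside `L` and at distance `c₂ > c₁` from every basis
candidate in `L`; solving one linear equation for `T` puts `(r, …, r)` in the right one of the two
classes as well. Every other committee of size `w` contains a candidate outside `L`, so a voter
at this point expects the cost `c₁ + p_L (c₂ - c₁)`. All candidates outside `L` are nearest to
her, so by strategy-proofness she can move her vote between any two of them without changing
`p_L`. Moving every vote cast outside `L` to one fixed candidate `k₀ ∉ L` therefore keeps `p_L`,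
and turns two profiles that agree on the vote counts of `L` into profiles with identical vote
counts, where anonymity applies.
-/

open Finset

/-- Number of votes received by candidate `k` under action profile `a`. -/
def votes {m n : ℕ} (a : Fin n → Fin m) (k : Fin m) : ℕ :=
  (univ.filter fun i => a i = k).card

/-- The candidate configuration of Instance 3 of the paper: in `ℝ^(m-1)`,
candidate `i` (for `i < m - 1`) sits at the `i`-th standard basis vector, and the
last candidate sits at `(r, r, ..., r)`. -/
noncomputable def multiCand (m : ℕ) (r : ℝ) : Fin m → EuclideanSpace ℝ (Fin (m - 1)) :=
  fun k =>
    if h : (k : ℕ) < m - 1 then EuclideanSpace.single (⟨(k : ℕ), h⟩ : Fin (m - 1)) (1 : ℝ)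
    else (WithLp.equiv 2 (Fin (m - 1) → ℝ)).symm (fun _ => r)

/-- Cost of the point `z` under an elected committee `L`:
the distance to the nearest elected candidate. -/
noncomputable def commCost {α : Type*} [PseudoMetricSpace α] {m : ℕ}
    (y : Fin m → α) (L : Finset (Fin m)) (z : α) : ℝ :=
  if h : L.Nonempty then L.inf' h (fun k => dist z (y k)) else 0

/-- `f` is a randomized `w`-winner mechanism: on every action profile it gives
a probability distribution over committees (subsets of candidates) of size `w`. -/
def IsCommMech {m n : ℕ} (w : ℕ) (f : (Fin n → Fin m) → Finset (Fin m) → ℝ) : Prop :=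
  ∀ a : Fin n → Fin m, (∀ L, 0 ≤ f a L) ∧ (∀ L, L.card ≠ w → f a L = 0) ∧
    ∑ L ∈ univ.filter (fun L : Finset (Fin m) => L.card = w), f a L = 1

/-- Expected cost of the point `z` under the committee lottery `f a`. -/
noncomputable def expCommCost {α : Type*} [PseudoMetricSpace α] {m n : ℕ}
    (y : Fin m → α) (w : ℕ) (f : (Fin n → Fin m) → Finset (Fin m) → ℝ)
    (a : Fin n → Fin m) (z : α) : ℝ :=
  ∑ L ∈ univ.filter (fun L : Finset (Fin m) => L.card = w), f a L * commCost y L z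

/-- Strategy-proofness of a randomized `w`-winner mechanism. -/
def CommSP {α : Type*} [PseudoMetricSpace α] {m n : ℕ}
    (y : Fin m → α) (w : ℕ) (f : (Fin n → Fin m) → Finset (Fin m) → ℝ) : Prop :=
  ∀ (i : Fin n) (xi : α) (a : Fin n → Fin m) (astar ai' : Fin m),
    (∀ k, dist xi (y astar) ≤ dist xi (y k)) →
    expCommCost y w f (Function.update a i astar) xi ≤
      expCommCost y w f (Function.update a i ai') xi

section Geometry

variable {ι : Type*} [Fintype ι] [DecidableEq ι]

lemma sum_ite_mem_const (S : Finset ι) (A B : ℝ) :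
    ∑ t, (if t ∈ S then A else B) = #S * A + #Sᶜ * B := by
  rw [← sum_add_sum_compl S, sum_ite_of_true fun _ h => h,
    sum_ite_of_false fun _ h => mem_compl.mp h]
  simp

noncomputable def indicatorComplPoint (S : Finset ι) (T : ℝ) : EuclideanSpace ℝ ι :=
  WithLp.toLp 2 fun t => if t ∈ S then 0 else T

lemma dist_indicatorComplPoint_single_sq (S : Finset ι) (T : ℝ) (j : ι) :
    dist (indicatorComplPoint S T) (EuclideanSpace.single j 1) ^ 2 =
      #Sᶜ * T ^ 2 + 1 - 2 * (if j ∈ S then 0 else T) := by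
  rw [dist_eq_norm, norm_sub_sq_real, EuclideanSpace.norm_sq_eq, EuclideanSpace.inner_single_right,
    PiLp.norm_single]
  simp only [indicatorComplPoint, Real.norm_eq_abs, sq_abs, apply_ite (· ^ 2), sum_ite_mem_const]
  split_ifs <;> simp; ring

lemma dist_indicatorComplPoint_const_sq (S : Finset ι) (T r : ℝ) :
    dist (indicatorComplPoint S T) (WithLp.toLp 2 fun _ => r) ^ 2 =
      #S * r ^ 2 + #Sᶜ * (T - r) ^ 2 := by
  rw [EuclideanSpace.dist_eq, Real.sq_sqrt (by positivity)]
  simp only [indicatorComplPoint, Real.dist_eq, sq_abs, apply_ite (· - r), apply_ite (· ^ 2),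
    sum_ite_mem_const]
  ring

lemma exists_dist_single_const_eq_ite {r : ℝ} (hr : 1 < r) (S : Finset ι) (hS : Sᶜ.Nonempty)
    (P : Prop) [Decidable P] :
    ∃ (x : EuclideanSpace ℝ ι) (c₁ c₂ : ℝ), c₁ < c₂ ∧
      (∀ j, dist x (EuclideanSpace.single j 1) = if j ∈ S then c₂ else c₁) ∧
      dist x (WithLp.toLp 2 fun _ => r) = if P then c₂ else c₁ := by
  set s : ℝ := ((#S : ℕ) : ℝ)
  set c : ℝ := ((#Sᶜ : ℕ) : ℝ) with hc_def
  set δ : ℝ := if P then 0 else 1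
  have hc : 1 ≤ c := Nat.one_le_cast.mpr hS.card_pos
  have hδ : δ ≤ 1 := by unfold δ; split_ifs <;> norm_num
  have hden : 0 < 2 * (c * r - δ) := by nlinarith
  -- `T` solves `s r² + c (T - r)² = c T² + 1 - 2 δ T`: the squared distance to `(r, …, r)`
  -- is then `c₂²` if `P` holds and `c₁²` otherwise.
  set T := ((s + c) * r ^ 2 - 1) / (2 * (c * r - δ))
  have hT : T * (2 * (c * r - δ)) = (s + c) * r ^ 2 - 1 := div_mul_cancel₀ _ hden.ne'
  have hTpos : 0 < T := div_pos (by nlinarith [(by positivity : (0:ℝ) ≤ s)]) hden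
  have hnn : 0 ≤ c * T ^ 2 + 1 - 2 * T := by nlinarith [sq_nonneg (T - 1)]
  have dist_eq {y : EuclideanSpace ℝ ι} {q : ℝ} (h : dist (indicatorComplPoint S T) y ^ 2 = q) :
      dist (indicatorComplPoint S T) y = √q := by rw [← h, Real.sqrt_sq dist_nonneg]
  refine ⟨indicatorComplPoint S T, √(c * T ^ 2 + 1 - 2 * T), √(c * T ^ 2 + 1),
    Real.sqrt_lt_sqrt hnn (by linarith), fun j => ?_, ?_⟩
  · rw [dist_eq (dist_indicatorComplPoint_single_sq S T j), ← hc_def]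
    split_ifs <;> ring_nf
  · rw [dist_eq (dist_indicatorComplPoint_const_sq S T r)]
    have : s * r ^ 2 + c * (T - r) ^ 2 = c * T ^ 2 + 1 - 2 * δ * T := by linear_combination -hT
    rw [this]
    unfold δ
    split_ifs <;> ring_nf

end Geometry

lemma exists_dist_multiCand_eq_ite {m : ℕ} {r : ℝ} (hr : 1 < r) (W : Finset (Fin m))
    (hW : #W < m - 1) :
    ∃ (x : EuclideanSpace ℝ (Fin (m - 1))) (c₁ c₂ : ℝ), c₁ < c₂ ∧
      ∀ k, dist x (multiCand m r k) = if k ∈ W then c₂ else c₁ := by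
  classical
  set S : Finset (Fin (m - 1)) := {t | Fin.castLE (Nat.sub_le m 1) t ∈ W}
  have hSW : #S ≤ #W := card_le_card_of_injOn _ (fun t ht => (mem_filter.mp ht).2)
    (Fin.castLE_injective _).injOn
  have hS : Sᶜ.Nonempty := card_pos.mp (by rw [card_compl, Fintype.card_fin]; omega)
  obtain ⟨x, c₁, c₂, hc, hsingle, hconst⟩ :=
    exists_dist_single_const_eq_ite hr S hS (∃ k ∈ W, m - 1 ≤ (k : ℕ))
  refine ⟨x, c₁, c₂, hc, fun k => ?_⟩
  by_cases hk : (k : ℕ) < m - 1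
  · rw [multiCand, dif_pos hk, hsingle]
    simp [S, Fin.castLE]
  · rw [multiCand, dif_neg hk, WithLp.equiv_symm_apply, hconst]
    congr 1
    refine propext ⟨fun ⟨k', hk', hk'm⟩ => ?_, fun h => ⟨k, h, by omega⟩⟩
    rwa [Fin.ext (by omega : (k : ℕ) = k')]

section Mechanism

variable {α : Type*} [PseudoMetricSpace α] {m n w : ℕ} {y : Fin m → α}
  {f : (Fin n → Fin m) → Finset (Fin m) → ℝ} {L₀ : Finset (Fin m)} {x : α} {c₁ c₂ : ℝ}

lemma commCost_eq_ite (hd : ∀ k, dist x (y k) = if k ∈ L₀ then c₂ else c₁) (hc : c₁ ≤ c₂)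
    {L : Finset (Fin m)} (hL : L.Nonempty) :
    commCost y L x = if L ⊆ L₀ then c₂ else c₁ := by
  rw [commCost, dif_pos hL]
  split_ifs with hsub
  · calc L.inf' hL (fun k => dist x (y k)) = L.inf' hL (fun _ => c₂) :=
          inf'_congr hL rfl fun k hk => by rw [hd, if_pos (hsub hk)]
      _ = c₂ := inf'_const hL c₂
  · obtain ⟨k, hkL, hk⟩ := not_subset.mp hsub
    refine le_antisymm ((inf'_le _ hkL).trans_eq (by rw [hd, if_neg hk])) ?_
    exact le_inf' _ _ fun k' _ => by rw [hd]; split_ifs <;> [exact hc; exact le_rfl]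

lemma expCommCost_eq (hmech : IsCommMech w f) (hw : 1 ≤ w) (hL₀ : #L₀ = w)
    (hd : ∀ k, dist x (y k) = if k ∈ L₀ then c₂ else c₁) (hc : c₁ ≤ c₂) (a : Fin n → Fin m) :
    expCommCost y w f a x = c₁ + f a L₀ * (c₂ - c₁) := by
  have hcost : ∀ L ∈ univ.filter (fun L : Finset (Fin m) => #L = w),
      f a L * commCost y L x = f a L * c₁ + if L = L₀ then f a L * (c₂ - c₁) else 0 := by
    intro L hL
    have hLw : #L = w := (mem_filter.mp hL).2
    rw [commCost_eq_ite hd hc (card_pos.mp (by omega))]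
    by_cases hLL₀ : L = L₀
    · simp only [hLL₀, subset_refl, if_true]
      ring
    · have hsub : ¬L ⊆ L₀ := fun h => hLL₀ (eq_of_subset_of_card_le h (by omega))
      simp [hsub, hLL₀]
  rw [expCommCost, sum_congr rfl hcost, sum_add_distrib, ← sum_mul, (hmech a).2.2, sum_ite_eq']
  simp [hL₀]

lemma apply_update_eq_of_dist_eq_ite (hsp : CommSP y w f) (hmech : IsCommMech w f)
    (hw : 1 ≤ w) (hL₀ : #L₀ = w) (hc : c₁ < c₂)
    (hd : ∀ k, dist x (y k) = if k ∈ L₀ then c₂ else c₁) {k₁ k₂ : Fin m}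
    (hk₁ : k₁ ∉ L₀) (hk₂ : k₂ ∉ L₀) (a : Fin n → Fin m) (i : Fin n) :
    f (Function.update a i k₁) L₀ = f (Function.update a i k₂) L₀ := by
  have nearest : ∀ k ∉ L₀, ∀ k', dist x (y k) ≤ dist x (y k') := fun k hk k' => by
    rw [hd, hd, if_neg hk]
    split_ifs <;> [exact hc.le; exact le_rfl]
  have hcost := le_antisymm (hsp i x a k₁ k₂ (nearest k₁ hk₁)) (hsp i x a k₂ k₁ (nearest k₂ hk₂))
  rw [expCommCost_eq hmech hw hL₀ hd hc.le, expCommCost_eq hmech hw hL₀ hd hc.le] at hcost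
  exact mul_right_cancel₀ (sub_ne_zero.mpr hc.ne') (add_left_cancel hcost)

end Mechanism

lemma eq_of_update_invariant {ι κ β : Type*} [Fintype ι] [DecidableEq ι] {g : (ι → κ) → β}
    {L : Set κ} (hg : ∀ a i k k', k ∉ L → k' ∉ L →
      g (Function.update a i k) = g (Function.update a i k'))
    {a b : ι → κ} (hab : ∀ i, a i = b i ∨ a i ∉ L ∧ b i ∉ L) : g a = g b := by
  have key : ∀ s : Finset ι, g (s.piecewise b a) = g a := by
    intro s
    induction s using Finset.induction_on with
    | empty => rw [piecewise_empty]
    | insert j s hj ih =>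
      rw [piecewise_insert, ← ih]
      conv_rhs =>
        rw [← Function.update_eq_self j (s.piecewise b a), piecewise_eq_of_notMem _ _ _ hj]
      rcases hab j with h | ⟨ha, hb⟩
      · rw [h]
      · exact hg _ _ _ _ hb ha
  rw [← key univ, piecewise_univ]

section Votes

variable {m n : ℕ}

def redirectOutside (L : Finset (Fin m)) (k₀ : Fin m) (a : Fin n → Fin m) : Fin n → Fin m :=
  fun i => if a i ∈ L then a i else k₀

lemma redirectOutside_eq_or {L : Finset (Fin m)} {k₀ : Fin m} (hk₀ : k₀ ∉ L)
    (a : Fin n → Fin m) (i : Fin n) :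
    a i = redirectOutside L k₀ a i ∨ a i ∉ L ∧ redirectOutside L k₀ a i ∉ L := by
  unfold redirectOutside
  split_ifs with hi
  · exact Or.inl rfl
  · exact Or.inr ⟨hi, hk₀⟩

lemma sum_votes (a : Fin n → Fin m) : ∑ k, votes a k = n := by
  simp [votes, sum_card_fiberwise_eq_card_filter]

lemma votes_eq_of_forall_ne {a b : Fin n → Fin m} (k₀ : Fin m)
    (h : ∀ k ≠ k₀, votes a k = votes b k) : votes a k₀ = votes b k₀ := by
  have hsum := (sum_votes a).trans (sum_votes b).symm
  rw [← add_sum_erase _ _ (mem_univ k₀), ← add_sum_erase _ _ (mem_univ k₀),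
    sum_congr rfl fun k hk => h k (ne_of_mem_erase hk)] at hsum
  exact Nat.add_right_cancel hsum

lemma votes_redirectOutside_of_ne (L : Finset (Fin m)) {k₀ k : Fin m} (hk : k ≠ k₀)
    (a : Fin n → Fin m) :
    votes (redirectOutside L k₀ a) k = if k ∈ L then votes a k else 0 := by
  unfold votes redirectOutside
  split_ifs with hkL
  · congr 1
    refine filter_congr fun i _ => ?_
    split_ifs with hi
    · rfl
    · exact ⟨fun h => absurd h.symm hk, fun h => absurd (h ▸ hkL) hi⟩
  · refine card_eq_zero.mpr (filter_eq_empty_iff.mpr fun i _ => ?_)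
    split_ifs with hi
    · exact fun h => hkL (h ▸ hi)
    · exact fun h => hk h.symm

lemma votes_redirectOutside_eq {L : Finset (Fin m)} {a b : Fin n → Fin m}
    (h : ∀ k ∈ L, votes a k = votes b k) (k₀ k : Fin m) :
    votes (redirectOutside L k₀ a) k = votes (redirectOutside L k₀ b) k := by
  have hne : ∀ k ≠ k₀, votes (redirectOutside L k₀ a) k = votes (redirectOutside L k₀ b) k :=
    fun k hk => by
      rw [votes_redirectOutside_of_ne L hk, votes_redirectOutside_of_ne L hk]
      split_ifs with hkL <;> [exact h k hkL; rfl]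
  by_cases hk : k = k₀
  · exact hk ▸ votes_eq_of_forall_ne k₀ hne
  · exact hne k hk

end Votes

theorem stmt7_general {m n w : ℕ} (r : ℝ) (hr : 2 < r)
    (hw : 1 ≤ w) (hwm : w < m - 1)
    (f : (Fin n → Fin m) → Finset (Fin m) → ℝ)
    (hmech : IsCommMech w f)
    (hanon : ∀ a a' : Fin n → Fin m, (∀ k, votes a k = votes a' k) → f a = f a')
    (hsp : CommSP (multiCand m r) w f) :
    ∀ L : Finset (Fin m), L.card = w →
      ∀ a a' : Fin n → Fin m, (∀ k ∈ L, votes a k = votes a' k) →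
        f a L = f a' L := by
  intro L hL a a' hvotes
  obtain ⟨x, c₁, c₂, hc, hd⟩ := exists_dist_multiCand_eq_ite (by linarith) L (hL ▸ hwm)
  obtain ⟨k₀, -, hk₀⟩ := exists_mem_notMem_of_card_lt_card (s := L) (t := univ)
    (by rw [card_univ, Fintype.card_fin]; omega)
  have hredirect (b : Fin n → Fin m) : f b L = f (redirectOutside L k₀ b) L :=
    eq_of_update_invariant (g := fun b => f b L) (L := L)
      (fun c i k k' hk hk' => apply_update_eq_of_dist_eq_ite hsp hmech hw hL hc hd hk hk' c i)
      (redirectOutside_eq_or hk₀ b)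
  rw [hredirect a, hredirect a', hanon _ _ (votes_redirectOutside_eq hvotes k₀)]

/-- On the instance `multiCand m r` (basis vectors plus `(r, ..., r)`, `r > 2`),
for any anonymous strategy-proof randomized `w`-winner scv mechanism with
`1 ≤ w < m - 1`, the probability that a committee `L` of size `w` is elected
depends only on the numbers of votes received by the members of `L`. -/
theorem stmt7 {m n w : ℕ} (hm : 3 ≤ m) (r : ℝ) (hr : 2 < r)
    (hw : 1 ≤ w) (hwm : w < m - 1)
    (f : (Fin n → Fin m) → Finset (Fin m) → ℝ)
    (hmech : IsCommMech w f)
    (hanon : ∀ a a' : Fin n → Fin m, (∀ k, votes a k = votes a' k) → f a = f a')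
    (hsp : CommSP (multiCand m r) w f) :
    ∀ L : Finset (Fin m), L.card = w →
      ∀ a a' : Fin n → Fin m, (∀ k ∈ L, votes a k = votes a' k) →
        f a L = f a' L :=
  stmt7_general r hr hw hwm f hmech hanon hsp
end

section
/- Let f be a randomized two-winner scv mechanism for m candidates at arbitrary locations in a Euclidean space and n voters which is independent and monotone: there exist functions q_{k,l} such that for every action profile a, p_{k,l}(a) = q_{k,l}(n_k, n_l), where n_k is the number of voters voting for candidate k, and q_{k,l} is weakly increasing in each of its two arguments (over vote counts arising from valid profiles, i.e., q_{k,l}(n_k + 1, n_l) ≥ q_{k,l}(n_k, n_l) and q_{k,l}(n_k, n_l + 1) ≥ q_{k,l}(n_k, n_l)). Then f is strategy-proof. -/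
open Finset

/-- `f` is a randomized two-winner mechanism: on every action profile it gives a
probability distribution over unordered pairs of distinct candidates
(represented by a symmetric nonnegative function vanishing on the diagonal whose
values over the pairs `k < l` sum to one). -/
def IsRandMech {m n : ℕ} (f : (Fin n → Fin m) → Fin m → Fin m → ℝ) : Prop :=
  ∀ a : Fin n → Fin m, (∀ k l, 0 ≤ f a k l) ∧ (∀ k l, f a k l = f a l k) ∧
    (∀ k, f a k k = 0) ∧
    ∑ p ∈ univ.filter (fun p : Fin m × Fin m => p.1 < p.2), f a p.1 p.2 = 1

/-- Expected cost of the point `z` under the lottery `f a`. -/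
noncomputable def expCost {α : Type*} [PseudoMetricSpace α] {m n : ℕ}
    (y : Fin m → α) (f : (Fin n → Fin m) → Fin m → Fin m → ℝ)
    (a : Fin n → Fin m) (z : α) : ℝ :=
  ∑ p ∈ univ.filter (fun p : Fin m × Fin m => p.1 < p.2),
    f a p.1 p.2 * pairCost y p.1 p.2 z

/-- Expected social cost of the randomized mechanism `f` on action profile `a`
and location profile `x`. -/
noncomputable def expSC {α : Type*} [PseudoMetricSpace α] {m n : ℕ}
    (y : Fin m → α) (f : (Fin n → Fin m) → Fin m → Fin m → ℝ)
    (a : Fin n → Fin m) (x : Fin n → α) : ℝ :=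
  ∑ p ∈ univ.filter (fun p : Fin m × Fin m => p.1 < p.2),
    f a p.1 p.2 * socialCost y p.1 p.2 x

/-- Strategy-proofness of a randomized two-winner mechanism: voting for a
nearest candidate always minimizes a voter's expected cost, whatever the
other voters do. -/
def RandSP {α : Type*} [PseudoMetricSpace α] {m n : ℕ}
    (y : Fin m → α) (f : (Fin n → Fin m) → Fin m → Fin m → ℝ) : Prop :=
  ∀ (i : Fin n) (xi : α) (a : Fin n → Fin m) (astar ai' : Fin m),
    (∀ k, dist xi (y astar) ≤ dist xi (y k)) →
    expCost y f (Function.update a i astar) xi ≤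
      expCost y f (Function.update a i ai') xi

/-!
Fix the deviating voter `i`, her location `x`, and a nearest candidate `c`. The truthful expected
cost is `dist x (y c)` plus the expected excess `pairCost - dist x (y c)`, which is nonnegative and
vanishes on every pair containing `c`. Moving her vote from `c` to anything else raises at most
one vote count of a pair not containing `c`, so by independence and monotonicity it can only shift
probability towards those pairs, whose excess is nonnegative.
-/

section Votes

variable {m n : ℕ}

lemma votes_update_of_ne {b : Fin n → Fin m} {i : Fin n} {c k : Fin m} (hb : b i ≠ k)
    (hc : c ≠ k) : votes (Function.update b i c) k = votes b k := by
  unfold votes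
  congr 1
  ext j
  by_cases hj : j = i
  · subst hj; simp [hb, hc]
  · simp [hj]

lemma votes_update_self {b : Fin n → Fin m} {i : Fin n} {c : Fin m} (hb : b i ≠ c) :
    votes (Function.update b i c) c = votes b c + 1 := by
  unfold votes
  have hfilter : univ.filter (fun j => Function.update b i c j = c) =
      insert i (univ.filter fun j => b j = c) := by
    ext j
    by_cases hj : j = i
    · subst hj; simp
    · simp [hj]
  rw [hfilter, card_insert_of_notMem (by simp [hb])]

lemma votes_add_votes_lt {b : Fin n → Fin m} {i : Fin n} {k l : Fin m} (hkl : k ≠ l)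
    (hk : b i ≠ k) (hl : b i ≠ l) : votes b k + votes b l < n := by
  unfold votes
  rw [← card_union_of_disjoint (disjoint_filter_filter' _ _ fun _ hk' hl' j hj =>
    hkl ((hk' j hj).symm.trans (hl' j hj))), ← filter_or]
  calc (univ.filter fun j => b j = k ∨ b j = l).card < (univ : Finset (Fin n)).card :=
        card_lt_card (filter_ssubset.mpr ⟨i, mem_univ i, by tauto⟩)
    _ = n := card_fin n

end Votes

section Mechanism

variable {α : Type*} [PseudoMetricSpace α] {m n : ℕ}

lemma expCost_eq_add_sum_sub {y : Fin m → α} {f : (Fin n → Fin m) → Fin m → Fin m → ℝ}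
    {a : Fin n → Fin m}
    (hf : ∑ p ∈ univ.filter (fun p : Fin m × Fin m => p.1 < p.2), f a p.1 p.2 = 1)
    (z : α) (d : ℝ) :
    expCost y f a z = d + ∑ p ∈ univ.filter (fun p : Fin m × Fin m => p.1 < p.2),
      f a p.1 p.2 * (pairCost y p.1 p.2 z - d) := by
  simp only [expCost, mul_sub, sum_sub_distrib, ← sum_mul, hf]
  ring

lemma prob_le_prob_update_of_ne {f : (Fin n → Fin m) → Fin m → Fin m → ℝ}
    {q : Fin m → Fin m → ℕ → ℕ → ℝ}
    (hind : ∀ (a : Fin n → Fin m) (k l : Fin m), f a k l = q k l (votes a k) (votes a l))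
    (hmono : ∀ (k l : Fin m) (s t : ℕ), k ≠ l → s + t < n →
      q k l s t ≤ q k l (s + 1) t ∧ q k l s t ≤ q k l s (t + 1))
    {b : Fin n → Fin m} {i : Fin n} (c : Fin m) {k l : Fin m} (hkl : k ≠ l)
    (hk : b i ≠ k) (hl : b i ≠ l) :
    f b k l ≤ f (Function.update b i c) k l := by
  have hq := hmono k l _ _ hkl (votes_add_votes_lt hkl hk hl)
  rw [hind, hind]
  by_cases hck : c = k
  · subst hck
    rw [votes_update_self hk, votes_update_of_ne hl hkl]
    exact hq.1
  by_cases hcl : c = l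
  · subst hcl
    rw [votes_update_self hl, votes_update_of_ne hk hkl.symm]
    exact hq.2
  rw [votes_update_of_ne hk hck, votes_update_of_ne hl hcl]

end Mechanism

/-- Any independent and monotone randomized two-winner scv mechanism (the
probability of each pair depends only on, and is weakly increasing in, the
vote counts of its two members) is strategy-proof. -/
theorem stmt9 {dim m n : ℕ} (y : Fin m → EuclideanSpace ℝ (Fin dim))
    (f : (Fin n → Fin m) → Fin m → Fin m → ℝ) (hmech : IsRandMech f)
    (q : Fin m → Fin m → ℕ → ℕ → ℝ)
    (hind : ∀ (a : Fin n → Fin m) (k l : Fin m),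
      f a k l = q k l (votes a k) (votes a l))
    (hmono : ∀ (k l : Fin m) (s t : ℕ), k ≠ l → s + t < n →
      q k l s t ≤ q k l (s + 1) t ∧ q k l s t ≤ q k l s (t + 1)) :
    RandSP y f := by
  intro i x a c c' hc
  set b := Function.update a i c
  have hdev : Function.update a i c' = Function.update b i c' := by
    simp only [b, Function.update_idem]
  rw [hdev, expCost_eq_add_sum_sub (hmech _).2.2.2 x (dist x (y c)),
    expCost_eq_add_sum_sub (hmech _).2.2.2 x (dist x (y c))]
  refine add_le_add_right (sum_le_sum fun p hp => ?_) _
  by_cases hpc : p.1 = c ∨ p.2 = c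
  · have hcost : pairCost y p.1 p.2 x = dist x (y c) := by
      rcases hpc with h | h <;> rw [h]
      · exact min_eq_left (hc _)
      · exact min_eq_right (hc _)
    simp [hcost]
  push Not at hpc
  have hb : b i = c := Function.update_self i c a
  have hexcess : 0 ≤ pairCost y p.1 p.2 x - dist x (y c) :=
    sub_nonneg.mpr (le_min (hc p.1) (hc p.2))
  exact mul_le_mul_of_nonneg_right
    (prob_le_prob_update_of_ne hind hmono c' (mem_filter.mp hp).2.ne
      (hb ▸ hpc.1.symm) (hb ▸ hpc.2.symm)) hexcess
end

section
/- Let m ≥ 3, let r > 2 be real, and place m candidates in ℝ^{m−1} by y_i = e_i for 1 ≤ i ≤ m−1 and y_m = (r, r, …, r). If a randomized single-winner scv mechanism f for these candidates and n voters is anonymous, strategy-proof, and has finite distortion on this candidate configuration, then f is the Random Dictator mechanism: for every action profile, each candidate y_k is elected with probability n_k/n, where n_k is the number of votes for candidate k. -/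
/-!
Strategy-proofness is tested at points `z` from which every candidate except `y k` is at one
common distance and `y k` is strictly farther. Both candidates a voter may switch between are
then nearest to `z`, so her expected cost must not change, and this pins `f · k`: a switch
between two other candidates cannot move the probability of `k`. For the configuration
`e₁, …, e_{m-1}, (r, …, r)` such points exist for every candidate (the origin for the last one,
and `(r, …, r) - ε e_t` for `e_t`).

So when one voter switches from `p` to `q`, some amount of probability moves from `p` to `q` and
nowhere else. Using a third candidate, this amount does not depend on `p, q`; it does not depend
on the other ballots either, and by anonymity not on the voter. Hence `f a k - d * votes a k` is
invariant under every change of one ballot and so constant, and unanimity, which finite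
distortion forces because `OPT = 0` at unanimous profiles, gives `d = 1 / n`.
-/

open Finset

/-- Social cost of the single winner `y k` on location profile `x`. -/
noncomputable def scost1 {α : Type*} [PseudoMetricSpace α] {m n : ℕ}
    (y : Fin m → α) (k : Fin m) (x : Fin n → α) : ℝ :=
  ∑ i, dist (x i) (y k)

/-- Optimal social cost over single winners. -/
noncomputable def OPT1 {α : Type*} [PseudoMetricSpace α] {m n : ℕ}
    (y : Fin m → α) (x : Fin n → α) : ℝ :=
  sInf {c : ℝ | ∃ k : Fin m, c = scost1 y k x}

/-- `f` is a randomized single-winner mechanism: it gives a probability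
distribution over the candidates. -/
def IsRandMech1 {m n : ℕ} (f : (Fin n → Fin m) → Fin m → ℝ) : Prop :=
  ∀ a : Fin n → Fin m, (∀ k, 0 ≤ f a k) ∧ ∑ k, f a k = 1

/-- Expected cost of the point `z` under the single-winner lottery `f a`. -/
noncomputable def expCost1 {α : Type*} [PseudoMetricSpace α] {m n : ℕ}
    (y : Fin m → α) (f : (Fin n → Fin m) → Fin m → ℝ)
    (a : Fin n → Fin m) (z : α) : ℝ :=
  ∑ k, f a k * dist z (y k)

/-- Expected social cost of the single-winner mechanism `f`. -/
noncomputable def expSC1 {α : Type*} [PseudoMetricSpace α] {m n : ℕ}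
    (y : Fin m → α) (f : (Fin n → Fin m) → Fin m → ℝ)
    (a : Fin n → Fin m) (x : Fin n → α) : ℝ :=
  ∑ k, f a k * scost1 y k x

/-- Strategy-proofness of a randomized single-winner mechanism. -/
def RandSP1 {α : Type*} [PseudoMetricSpace α] {m n : ℕ}
    (y : Fin m → α) (f : (Fin n → Fin m) → Fin m → ℝ) : Prop :=
  ∀ (i : Fin n) (xi : α) (a : Fin n → Fin m) (astar ai' : Fin m),
    (∀ k, dist xi (y astar) ≤ dist xi (y k)) →
    expCost1 y f (Function.update a i astar) xi ≤
      expCost1 y f (Function.update a i ai') xi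

open Finset Function

theorem eq_of_forall_update_eq {ι β γ : Type*} [Fintype ι] [DecidableEq ι]
    {F : (ι → β) → γ} (hF : ∀ a i v, F (update a i v) = F a) (a b : ι → β) : F a = F b := by
  suffices ∀ s : Finset ι, F (s.piecewise a b) = F b by simpa using this univ
  intro s
  induction s using Finset.induction_on with
  | empty => simp
  | insert i s _ ih => rw [piecewise_insert, hF, ih]

section Votes

variable {m n : ℕ}

theorem votes_eq_sum (a : Fin n → Fin m) (k : Fin m) :
    votes a k = ∑ i, if a i = k then 1 else 0 := by
  rw [votes, card_filter]

theorem votes_update (a : Fin n → Fin m) (i : Fin n) (v k : Fin m) :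
    votes (update a i v) k + (if a i = k then 1 else 0)
      = votes a k + (if v = k then 1 else 0) := by
  have hupd : (fun x => if update a i v x = k then 1 else 0)
      = update (fun x => if a x = k then 1 else 0) i (if v = k then 1 else 0) := by
    funext x
    exact apply_update (fun _ w => if w = k then 1 else 0) a i v x
  rw [votes_eq_sum, votes_eq_sum, hupd, sum_update_of_mem (mem_univ i),
    ← add_sum_erase _ _ (mem_univ i), sdiff_singleton_eq_erase]
  ring

theorem votes_const (c k : Fin m) :
    votes (fun _ : Fin n => c) k = if c = k then n else 0 := by
  split_ifs with h <;> simp [votes, h]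

end Votes

section Mechanism

variable {m n : ℕ}

def IsAnonymous (f : (Fin n → Fin m) → Fin m → ℝ) : Prop :=
  ∀ a a' : Fin n → Fin m, (∀ k, votes a k = votes a' k) → f a = f a'

def IsUnanimous (f : (Fin n → Fin m) → Fin m → ℝ) : Prop :=
  ∀ c k : Fin m, f (fun _ => c) k = if k = c then 1 else 0

def IsLocalized (f : (Fin n → Fin m) → Fin m → ℝ) : Prop :=
  ∀ (a : Fin n → Fin m) (i : Fin n) (j l k : Fin m), k ≠ j → k ≠ l →
    f (update a i j) k = f (update a i l) k

def gain (f : (Fin n → Fin m) → Fin m → ℝ) (a : Fin n → Fin m) (i : Fin n) (p q : Fin m) : ℝ :=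
  f (update a i q) q - f (update a i p) q

variable {f : (Fin n → Fin m) → Fin m → ℝ}

namespace IsLocalized

theorem apply_update_sub_apply_update (hloc : IsLocalized f) (hmech : IsRandMech1 f)
    (a : Fin n → Fin m) (i : Fin n) {p q : Fin m} (hpq : p ≠ q) :
    f (update a i p) p - f (update a i q) p = gain f a i p q := by
  have hsum : ∑ k, (f (update a i q) k - f (update a i p) k) = 0 := by
    rw [sum_sub_distrib, (hmech _).2, (hmech _).2, sub_self]
  rw [Fintype.sum_eq_add p q hpq fun k hk => sub_eq_zero.2 (hloc a i q p k hk.2 hk.1)] at hsum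
  rw [gain]
  linarith

theorem update_sub_update_apply (hloc : IsLocalized f) (hmech : IsRandMech1 f)
    (a : Fin n → Fin m) (i : Fin n) (p q k : Fin m) :
    f (update a i q) k - f (update a i p) k
      = gain f a i p q * ((if q = k then 1 else 0) - if p = k then 1 else 0) := by
  rcases eq_or_ne p q with rfl | hpq
  · simp
  by_cases hkq : k = q
  · subst hkq
    simp [hpq, gain]
  by_cases hkp : k = p
  · subst hkp
    rw [← hloc.apply_update_sub_apply_update hmech a i hpq]
    simp [hpq.symm]
  · simp [Ne.symm hkp, Ne.symm hkq, hloc a i q p k hkq hkp]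

theorem gain_eq_of_pairs (hloc : IsLocalized f) (hmech : IsRandMech1 f) (hm : 3 ≤ m)
    (a : Fin n → Fin m) (i : Fin n) {p q p' q' : Fin m} (hpq : p ≠ q) (hpq' : p' ≠ q') :
    gain f a i p q = gain f a i p' q' := by
  -- what `q` gains is what `p` loses, and `p` loses the same whether it goes to `q` or to `s`
  have target : ∀ {p q s : Fin m}, p ≠ q → p ≠ s → gain f a i p q = gain f a i p s := by
    intro p q s hpq hps
    rw [← hloc.apply_update_sub_apply_update hmech a i hpq,
      ← hloc.apply_update_sub_apply_update hmech a i hps, hloc a i q s p hpq hps]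
  obtain ⟨s, hsp, hsp'⟩ := Fin.exists_ne_and_ne_of_two_lt p p' (by omega)
  calc gain f a i p q = gain f a i p s := target hpq hsp.symm
    _ = gain f a i p' s := by rw [gain, gain, hloc a i p p' s hsp hsp']
    _ = gain f a i p' q' := (target hpq' hsp'.symm).symm

theorem gain_update_of_ne (hloc : IsLocalized f) (hmech : IsRandMech1 f) (hm : 3 ≤ m)
    (a : Fin n → Fin m) {i i' : Fin n} (hi : i' ≠ i) (v : Fin m) {p q : Fin m} (hpq : p ≠ q) :
    gain f (update a i' v) i p q = gain f a i p q := by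
  obtain ⟨c, hcv, hca⟩ := Fin.exists_ne_and_ne_of_two_lt v (a i') (by omega)
  obtain ⟨p₀, hp₀, -⟩ := Fin.exists_ne_and_ne_of_two_lt c c (by omega)
  -- `c` is neither of the ballots of voter `i'`, so her switch does not move `c`
  have hc : ∀ w, f (update (update a i' v) i w) c = f (update a i w) c := by
    intro w
    rw [update_comm hi, hloc _ i' v (a i') c hcv hca, ← update_of_ne hi w a, update_eq_self]
  calc gain f (update a i' v) i p q = gain f (update a i' v) i p₀ c :=
        hloc.gain_eq_of_pairs hmech hm _ i hpq hp₀
    _ = gain f a i p₀ c := by rw [gain, gain, hc, hc]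
    _ = gain f a i p q := hloc.gain_eq_of_pairs hmech hm a i hp₀ hpq

theorem gain_eq_of_profiles (hloc : IsLocalized f) (hmech : IsRandMech1 f) (hm : 3 ≤ m)
    (a a' : Fin n → Fin m) (i : Fin n) {p q : Fin m} (hpq : p ≠ q) :
    gain f a i p q = gain f a' i p q := by
  refine eq_of_forall_update_eq (F := fun b => gain f b i p q) (fun b i' v => ?_) a a'
  rcases eq_or_ne i' i with rfl | hi
  · simp only [gain, update_idem]
  · exact hloc.gain_update_of_ne hmech hm b hi v hpq

theorem gain_eq_gain (hloc : IsLocalized f) (hmech : IsRandMech1 f) (hanon : IsAnonymous f)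
    (hm : 3 ≤ m) (a a' : Fin n → Fin m) (i i' : Fin n) {p q p' q' : Fin m}
    (hpq : p ≠ q) (hpq' : p' ≠ q') :
    gain f a i p q = gain f a' i' p' q' := by
  have hvoter : ∀ w, f (update (fun _ => p) i w) = f (update (fun _ => p) i' w) := by
    intro w
    refine hanon _ _ fun k => ?_
    have h := votes_update (fun _ => p) i w k
    have h' := votes_update (fun _ => p) i' w k
    omega
  calc gain f a i p q = gain f (fun _ => p) i p q := hloc.gain_eq_of_profiles hmech hm _ _ i hpq
    _ = gain f (fun _ => p) i' p q := by rw [gain, gain, hvoter, hvoter]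
    _ = gain f a' i' p' q' := by
      rw [hloc.gain_eq_of_profiles hmech hm _ a' i' hpq,
        hloc.gain_eq_of_pairs hmech hm a' i' hpq hpq']

theorem eq_votes_div (hloc : IsLocalized f) (hmech : IsRandMech1 f) (hanon : IsAnonymous f)
    (hunan : IsUnanimous f) (hm : 3 ≤ m) (hn : 1 ≤ n) (a : Fin n → Fin m) (k : Fin m) :
    f a k = votes a k / n := by
  obtain ⟨c, hck, -⟩ := Fin.exists_ne_and_ne_of_two_lt k k (by omega)
  set d := gain f (fun _ => k) ⟨0, hn⟩ c k
  have hstep : ∀ b i v, f (update b i v) k - f b k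
      = d * ((if v = k then 1 else 0) - if b i = k then 1 else 0) := by
    intro b i v
    rcases eq_or_ne (b i) v with hv | hv
    · simp [← hv]
    have h := hloc.update_sub_update_apply hmech b i (b i) v k
    rwa [update_eq_self, hloc.gain_eq_gain hmech hanon hm b (fun _ => k) i ⟨0, hn⟩ hv hck] at h
  have hinv : ∀ b b' : Fin n → Fin m,
      f b k - d * votes b k = f b' k - d * votes b' k := by
    refine eq_of_forall_update_eq fun b i v => ?_
    have h := votes_update b i v k
    have h' : (votes (update b i v) k : ℝ) + (if b i = k then 1 else 0)
        = votes b k + (if v = k then 1 else 0) := by exact_mod_cast h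
    linear_combination hstep b i v - d * h'
  have hk := hinv a (fun _ => k)
  have hc := hinv (fun _ => c) (fun _ => k)
  simp only [hunan k k, hunan c k, votes_const, if_pos, if_neg hck, if_neg hck.symm] at hk hc
  rw [eq_div_iff (by positivity)]
  push_cast at hk hc
  linear_combination (n : ℝ) * hk + ((votes a k : ℝ) - n) * hc

end IsLocalized

end Mechanism

section Metric

variable {α : Type*} [PseudoMetricSpace α] {m n : ℕ}

def IsIsolatable {ι : Type*} (y : ι → α) (k : ι) : Prop :=
  ∃ (z : α) (ρ : ℝ), (∀ k' ≠ k, dist z (y k') = ρ) ∧ ρ < dist z (y k)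

theorem IsIsolatable.dist_pos {ι : Type*} {y : ι → α} {k k' : ι} (h : IsIsolatable y k)
    (hk : k' ≠ k) : 0 < dist (y k') (y k) := by
  obtain ⟨z, ρ, hρ, hlt⟩ := h
  linarith [dist_triangle z (y k') (y k), hρ k' hk]

theorem expCost1_eq_of_isolating {y : Fin m → α} {f : (Fin n → Fin m) → Fin m → ℝ}
    (hmech : IsRandMech1 f) {k : Fin m} {z : α} {ρ : ℝ} (hρ : ∀ k' ≠ k, dist z (y k') = ρ)
    (a : Fin n → Fin m) : expCost1 y f a z = ρ + f a k * (dist z (y k) - ρ) := by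
  have hterm : ∀ k', f a k' * dist z (y k')
      = f a k' * ρ + if k' = k then f a k * (dist z (y k) - ρ) else 0 := by
    intro k'
    split_ifs with h
    · subst h; ring
    · rw [hρ k' h, add_zero]
  rw [expCost1, sum_congr rfl fun k' _ => hterm k', sum_add_distrib, ← sum_mul, (hmech a).2,
    sum_ite_eq' univ k, if_pos (mem_univ k), one_mul]

theorem RandSP1.isLocalized {y : Fin m → α} {f : (Fin n → Fin m) → Fin m → ℝ}
    (hmech : IsRandMech1 f) (hsp : RandSP1 y f) (hiso : ∀ k, IsIsolatable y k) :
    IsLocalized f := by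
  intro a i j l k hkj hkl
  obtain ⟨z, ρ, hρ, hlt⟩ := hiso k
  have hnearest : ∀ j ≠ k, ∀ k', dist z (y j) ≤ dist z (y k') := by
    intro j hj k'
    rw [hρ j hj]
    rcases eq_or_ne k' k with rfl | hk'
    · exact hlt.le
    · exact (hρ k' hk').ge
  have h := le_antisymm (hsp i z a j l (hnearest j hkj.symm)) (hsp i z a l j (hnearest l hkl.symm))
  rw [expCost1_eq_of_isolating hmech hρ, expCost1_eq_of_isolating hmech hρ] at h
  exact mul_right_cancel₀ (sub_ne_zero.2 hlt.ne') (add_left_cancel h)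

theorem OPT1_const_eq_zero (y : Fin m → α) (c : Fin m) : OPT1 y (fun _ : Fin n => y c) = 0 := by
  have hmem : (0 : ℝ) ∈ {x : ℝ | ∃ k, x = scost1 y k fun _ : Fin n => y c} :=
    ⟨c, by simp [scost1]⟩
  have hlb : ∀ x ∈ {x : ℝ | ∃ k, x = scost1 y k fun _ : Fin n => y c}, 0 ≤ x := by
    rintro x ⟨k, rfl⟩
    exact sum_nonneg fun _ _ => dist_nonneg
  exact le_antisymm (csInf_le ⟨0, hlb⟩ hmem) (le_csInf ⟨0, hmem⟩ hlb)

def HasBoundedDistortion (y : Fin m → α) (f : (Fin n → Fin m) → Fin m → ℝ) : Prop :=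
  ∃ C : ℝ, ∀ (a : Fin n → Fin m) (x : Fin n → α),
    Consistent y a x → expSC1 y f a x ≤ C * OPT1 y x

theorem HasBoundedDistortion.isUnanimous {y : Fin m → α} {f : (Fin n → Fin m) → Fin m → ℝ}
    (hdist : HasBoundedDistortion y f) (hmech : IsRandMech1 f) (hn : 1 ≤ n)
    (hsep : Pairwise fun k c => 0 < dist (y k) (y c)) : IsUnanimous f := by
  intro c
  obtain ⟨C, hC⟩ := hdist
  have hle := hC (fun _ => c) (fun _ => y c) fun _ k => by simp
  rw [OPT1_const_eq_zero, mul_zero, expSC1] at hle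
  have hterm : ∀ k ∈ univ, 0 ≤ f (fun _ => c) k * scost1 y k fun _ : Fin n => y c :=
    fun k _ => mul_nonneg ((hmech _).1 k) (sum_nonneg fun _ _ => dist_nonneg)
  have hzero := (sum_eq_zero_iff_of_nonneg hterm).1 (le_antisymm hle (sum_nonneg hterm))
  have hoff : ∀ k ≠ c, f (fun _ => c) k = 0 := by
    intro k hk
    have hpos : 0 < scost1 y k fun _ : Fin n => y c := by
      simp only [scost1, sum_const, card_univ, Fintype.card_fin, nsmul_eq_mul]
      exact mul_pos (by exact_mod_cast hn) (hsep hk.symm)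
    exact (mul_eq_zero.1 (hzero k (mem_univ k))).resolve_right hpos.ne'
  intro k
  split_ifs with hk
  · subst hk
    rw [← (hmech _).2, sum_eq_single k (fun k' _ hk' => hoff k' hk') (by simp)]
  · exact hoff k hk

end Metric

section Configuration

variable {N : ℕ}

theorem inner_toLp_const_single (r : ℝ) (t : Fin N) :
    inner ℝ (WithLp.toLp 2 (fun _ => r) : EuclideanSpace ℝ (Fin N)) (EuclideanSpace.single t 1)
      = r := by
  simp [EuclideanSpace.inner_single_right]

theorem norm_toLp_const_sq (r : ℝ) :
    ‖(WithLp.toLp 2 (fun _ => r) : EuclideanSpace ℝ (Fin N))‖ ^ 2 = N * r ^ 2 := by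
  rw [EuclideanSpace.norm_eq, Real.sq_sqrt (by positivity)]
  simp

theorem inner_single_single (s t : Fin N) :
    inner ℝ (EuclideanSpace.single s (1 : ℝ)) (EuclideanSpace.single t (1 : ℝ))
      = if s = t then 1 else 0 := by
  simp [EuclideanSpace.inner_single_right, eq_comm]

theorem dist_toLp_const_sub_smul_single_sq (r ε : ℝ) (s t : Fin N) :
    dist ((WithLp.toLp 2 fun _ => r) - ε • EuclideanSpace.single t 1)
        (EuclideanSpace.single s (1 : ℝ)) ^ 2
      = N * r ^ 2 - 2 * r + 1 - 2 * r * ε + ε ^ 2 + if s = t then 2 * ε else 0 := by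
  rw [dist_eq_norm, sub_right_comm, norm_sub_sq_real, norm_sub_sq_real]
  simp only [inner_sub_left, inner_smul_right, inner_toLp_const_single, norm_toLp_const_sq,
    inner_single_single, norm_smul]
  split_ifs <;> simp <;> ring

variable {m : ℕ} {r : ℝ}

theorem multiCand_of_lt (r : ℝ) {k : Fin m} (hk : (k : ℕ) < m - 1) :
    multiCand m r k = EuclideanSpace.single ⟨k, hk⟩ 1 :=
  dif_pos hk

theorem multiCand_of_not_lt (r : ℝ) {k : Fin m} (hk : ¬ (k : ℕ) < m - 1) :
    multiCand m r k = WithLp.toLp 2 fun _ => r :=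
  dif_neg hk

theorem multiCand_isolatable_of_lt (hr : 1 < r) {k : Fin m} (hk : (k : ℕ) < m - 1) :
    IsIsolatable (multiCand m r) k := by
  set t : Fin (m - 1) := ⟨k, hk⟩
  -- `2 r ε = ‖(r, …, r) - e_s‖²` makes `z` equidistant from `(r, …, r)` and every `e_s`, `s ≠ t`
  set ε := ((m - 1 : ℕ) * r ^ 2 - 2 * r + 1) / (2 * r)
  set z : EuclideanSpace ℝ (Fin (m - 1)) :=
    (WithLp.toLp 2 fun _ => r) - ε • EuclideanSpace.single t 1
  have hN : (1 : ℝ) ≤ (m - 1 : ℕ) := by exact_mod_cast (by omega : 1 ≤ m - 1)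
  have hε : 0 < ε := div_pos (by nlinarith) (by positivity)
  have hεr : 2 * r * ε = (m - 1 : ℕ) * r ^ 2 - 2 * r + 1 := mul_div_cancel₀ _ (by positivity)
  have hsq : ∀ s, dist z (EuclideanSpace.single s 1) ^ 2 = ε ^ 2 + if s = t then 2 * ε else 0 := by
    intro s
    rw [dist_toLp_const_sub_smul_single_sq]
    linear_combination -hεr
  refine ⟨z, ε, fun k' hk' => ?_, ?_⟩
  · by_cases hk'N : (k' : ℕ) < m - 1
    · have hst : (⟨k', hk'N⟩ : Fin (m - 1)) ≠ t := by simpa [t, Fin.ext_iff] using hk'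
      rw [multiCand_of_lt r hk'N, ← sq_eq_sq₀ dist_nonneg hε.le, hsq, if_neg hst, add_zero]
    · rw [multiCand_of_not_lt r hk'N, dist_eq_norm, sub_sub_cancel_left, norm_neg, norm_smul]
      simp [hε.le]
  · rw [multiCand_of_lt r hk, ← pow_lt_pow_iff_left₀ hε.le dist_nonneg two_ne_zero, hsq,
      if_pos rfl]
    linarith

theorem multiCand_isolatable_last (hm : 2 ≤ m) (hr : 1 < r) {k : Fin m} (hk : ¬ (k : ℕ) < m - 1) :
    IsIsolatable (multiCand m r) k := by
  refine ⟨0, 1, fun k' hk' => ?_, ?_⟩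
  · have hk'N : (k' : ℕ) < m - 1 := by
      have := Fin.val_ne_of_ne hk'
      omega
    simp [multiCand_of_lt r hk'N]
  · have hN : (1 : ℝ) ≤ (m - 1 : ℕ) := by exact_mod_cast (by omega : 1 ≤ m - 1)
    rw [multiCand_of_not_lt r hk, dist_zero_left,
      ← pow_lt_pow_iff_left₀ zero_le_one (norm_nonneg _) two_ne_zero, norm_toLp_const_sq]
    nlinarith

theorem multiCand_isolatable (hm : 2 ≤ m) (hr : 1 < r) (k : Fin m) :
    IsIsolatable (multiCand m r) k := by
  by_cases hk : (k : ℕ) < m - 1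
  · exact multiCand_isolatable_of_lt hr hk
  · exact multiCand_isolatable_last hm hr hk

end Configuration

/-- On the instance `multiCand m r` (`m ≥ 3`, `r > 2`), every anonymous
strategy-proof randomized single-winner scv mechanism with finite distortion
is the Random Dictator mechanism: each candidate is elected with probability
equal to its fraction of votes. -/
theorem stmt12 (m : ℕ) (hm : 3 ≤ m) (r : ℝ) (hr : 2 < r) (n : ℕ) (hn : 1 ≤ n)
    (f : (Fin n → Fin m) → Fin m → ℝ)
    (hmech : IsRandMech1 f)
    (hanon : ∀ a a' : Fin n → Fin m, (∀ k, votes a k = votes a' k) → f a = f a')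
    (hsp : RandSP1 (multiCand m r) f)
    (hfin : ∃ C : ℝ, ∀ (a : Fin n → Fin m)
      (x : Fin n → EuclideanSpace ℝ (Fin (m - 1))),
      Consistent (multiCand m r) a x →
        expSC1 (multiCand m r) f a x ≤ C * OPT1 (multiCand m r) x) :
    ∀ (a : Fin n → Fin m) (k : Fin m), f a k = (votes a k : ℝ) / (n : ℝ) := by
  have hiso : ∀ k, IsIsolatable (multiCand m r) k :=
    multiCand_isolatable (by omega) (by linarith)
  have hunan : IsUnanimous f :=
    HasBoundedDistortion.isUnanimous (y := multiCand m r) hfin hmech hn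
      fun k c hkc => (hiso c).dist_pos hkc
  exact (hsp.isLocalized hmech hiso).eq_votes_div hmech hanon hunan hm hn
end

section
/- For any m ≥ 2 candidates at arbitrary distinct locations in a Euclidean space and any number n of voters, the Sequential Dictator mechanism is a strategy-proof deterministic two-winner scv mechanism. -/
/-! Voter 0 is always elected. Any other voter can influence the outcome only while she is the
first voter disagreeing with voter 0, and then her own vote is elected. So a sincere vote either
elects her nearest candidate or yields the same outcome as any deviation. -/

open Finset

/-- The Sequential Dictator mechanism: output `(a 0, a j)` where `j` is the
smallest index with `a j ≠ a 0`; if all voters vote for the same candidate `i`,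
output `(0, i)` when `i ≠ 0` and `(0, 1)` when `i = 0`. -/
def seqDict {n m : ℕ} (hn : 0 < n) (hm : 2 ≤ m) (a : Fin n → Fin m) :
    Fin m × Fin m :=
  if h : (univ.filter (fun j => a j ≠ a ⟨0, hn⟩)).Nonempty then
    (a ⟨0, hn⟩, a ((univ.filter (fun j => a j ≠ a ⟨0, hn⟩)).min' h))
  else if a ⟨0, hn⟩ = ⟨0, by omega⟩ then (⟨0, by omega⟩, ⟨1, by omega⟩)
  else (⟨0, by omega⟩, a ⟨0, hn⟩)

theorem detSP_of_update_eq_or_mem {α : Type*} [PseudoMetricSpace α] {m n : ℕ}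
    (y : Fin m → α) (f : (Fin n → Fin m) → Fin m × Fin m)
    (hf : ∀ (a : Fin n → Fin m) (i : Fin n) (astar ai' : Fin m),
      f (Function.update a i astar) = f (Function.update a i ai') ∨
        astar = (f (Function.update a i astar)).1 ∨ astar = (f (Function.update a i astar)).2) :
    DetSP y f := by
  intro i xi a astar ai' hnear
  have hle : dist xi (y astar) ≤ pairCost y (f (Function.update a i ai')).1
      (f (Function.update a i ai')).2 xi := le_min (hnear _) (hnear _)
  rcases hf a i astar ai' with heq | hfst | hsnd
  · rw [heq]
  · exact (min_le_left _ _).trans (hfst ▸ hle)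
  · exact (min_le_right _ _).trans (hsnd ▸ hle)

namespace seqDict

variable {n m : ℕ} (hn : 0 < n) (hm : 2 ≤ m)

theorem fst_ne_snd (a : Fin n → Fin m) : (seqDict hn hm a).1 ≠ (seqDict hn hm a).2 := by
  unfold seqDict
  split_ifs with hdev hzero
  · exact fun h => (mem_filter.1 (min'_mem _ hdev)).2 h.symm
  · simp [Fin.ext_iff]
  · exact fun h => hzero h.symm

theorem first_voter_mem (a : Fin n → Fin m) :
    a ⟨0, hn⟩ = (seqDict hn hm a).1 ∨ a ⟨0, hn⟩ = (seqDict hn hm a).2 := by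
  unfold seqDict
  split_ifs with hdev hzero <;> simp_all

theorem eq_of_first_deviator (a : Fin n → Fin m) (j : Fin n) (hj : a j ≠ a ⟨0, hn⟩)
    (hfirst : ∀ k < j, a k = a ⟨0, hn⟩) : seqDict hn hm a = (a ⟨0, hn⟩, a j) := by
  have hmem : j ∈ univ.filter (fun k => a k ≠ a ⟨0, hn⟩) := by simpa using hj
  have hmin : (univ.filter (fun k => a k ≠ a ⟨0, hn⟩)).min' ⟨j, hmem⟩ = j :=
    (isLeast_min' _ _).unique
      ⟨hmem, fun k hk => not_lt.1 fun hkj => (mem_filter.1 hk).2 (hfirst k hkj)⟩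
  unfold seqDict
  rw [dif_pos ⟨j, hmem⟩, hmin]

theorem eq_of_agree_le_first_deviator (a a' : Fin n → Fin m) (j : Fin n)
    (hj : a j ≠ a ⟨0, hn⟩) (hfirst : ∀ k < j, a k = a ⟨0, hn⟩) (hagree : ∀ k ≤ j, a' k = a k) :
    seqDict hn hm a' = seqDict hn hm a := by
  have h0 : a' ⟨0, hn⟩ = a ⟨0, hn⟩ := hagree _ (Fin.le_iff_val_le_val.2 (Nat.zero_le _))
  rw [eq_of_first_deviator hn hm a j hj hfirst,
    eq_of_first_deviator hn hm a' j (by rwa [hagree j le_rfl, h0])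
      fun k hk => by rw [hagree k hk.le, h0, hfirst k hk],
    hagree j le_rfl, h0]

theorem update_eq_or_mem (a : Fin n → Fin m) (i : Fin n) (astar ai' : Fin m) :
    seqDict hn hm (Function.update a i astar) = seqDict hn hm (Function.update a i ai') ∨
      astar = (seqDict hn hm (Function.update a i astar)).1 ∨
      astar = (seqDict hn hm (Function.update a i astar)).2 := by
  by_cases hiz : i = ⟨0, hn⟩
  · subst hiz
    right
    simpa using first_voter_mem hn hm (Function.update a ⟨0, hn⟩ astar)
  have hz (v : Fin m) : Function.update a i v ⟨0, hn⟩ = a ⟨0, hn⟩ :=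
    Function.update_of_ne (Ne.symm hiz) v a
  by_cases hstar : astar = a ⟨0, hn⟩
  · right
    simpa [hz, hstar] using first_voter_mem hn hm (Function.update a i astar)
  set b := Function.update a i astar
  obtain ⟨j, hj, hmin⟩ :=
    wellFounded_lt.has_min {k | b k ≠ b ⟨0, hn⟩} ⟨i, by simpa [b, hz] using hstar⟩
  have hfirst (k : Fin n) (hk : k < j) : b k = b ⟨0, hn⟩ := not_not.1 fun hne => hmin k hne hk
  rcases eq_or_ne j i with rfl | hji
  · right; right
    simp [eq_of_first_deviator hn hm b j hj hfirst, b]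
  · left
    have hji : j < i :=
      (not_lt.1 fun hij => hstar (by simpa [b, hz] using hfirst i hij)).lt_of_ne hji
    have hagree (k : Fin n) (hk : k ≤ j) : Function.update a i ai' k = b k := by
      simp [b, Function.update_of_ne (hk.trans_lt hji).ne]
    exact (eq_of_agree_le_first_deviator hn hm b _ j hj hfirst hagree).symm

end seqDict

theorem stmt14_general {dim m n : ℕ} (hm : 2 ≤ m) (hn : 0 < n)
    (y : Fin m → EuclideanSpace ℝ (Fin dim)) :
    (∀ a : Fin n → Fin m, (seqDict hn hm a).1 ≠ (seqDict hn hm a).2) ∧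
      DetSP y (seqDict hn hm) :=
  ⟨seqDict.fst_ne_snd hn hm, detSP_of_update_eq_or_mem y _ (seqDict.update_eq_or_mem hn hm)⟩

/-- For any `m ≥ 2` candidates at distinct locations in a Euclidean space, the
Sequential Dictator mechanism is a strategy-proof deterministic two-winner scv
mechanism. -/
theorem stmt14 {dim m n : ℕ} (hm : 2 ≤ m) (hn : 0 < n)
    (y : Fin m → EuclideanSpace ℝ (Fin dim)) (hy : Function.Injective y) :
    (∀ a : Fin n → Fin m, (seqDict hn hm a).1 ≠ (seqDict hn hm a).2) ∧
      DetSP y (seqDict hn hm) :=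
  stmt14_general hm hn y
end

section
/- For any m ≥ 2 candidates at arbitrary distinct locations in a Euclidean space and any number n ≥ 2 of voters, the Sequential Dictator mechanism has distortion at most 2(n−2)σ + 1: for every action profile a and every location profile x consistent with a, SC(f(a), x) ≤ (2(n−2)σ + 1)·OPT(x), where σ = d_max/d_min for the candidate set. -/
open Finset

/-- Maximum distance between two distinct candidates. -/
noncomputable def dmaxC {α : Type*} [PseudoMetricSpace α] {m : ℕ} (y : Fin m → α) : ℝ :=
  sSup {c : ℝ | ∃ k l : Fin m, k ≠ l ∧ c = dist (y k) (y l)}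

/-- Minimum distance between two distinct candidates. -/
noncomputable def dminC {α : Type*} [PseudoMetricSpace α] {m : ℕ} (y : Fin m → α) : ℝ :=
  sInf {c : ℝ | ∃ k l : Fin m, k ≠ l ∧ c = dist (y k) (y l)}

lemma pairSetFin {m : ℕ} (f : Fin m → Fin m → ℝ) :
    {c : ℝ | ∃ k l : Fin m, k ≠ l ∧ c = f k l}.Finite := by
  apply Set.Finite.subset (Set.finite_range (fun p : Fin m × Fin m => f p.1 p.2))
  rintro c ⟨k, l, _, rfl⟩
  exact ⟨(k, l), rfl⟩

lemma pairSetNe {m : ℕ} (hm : 2 ≤ m) (f : Fin m → Fin m → ℝ) :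
    {c : ℝ | ∃ k l : Fin m, k ≠ l ∧ c = f k l}.Nonempty := by
  refine ⟨f ⟨0, by omega⟩ ⟨1, by omega⟩, ⟨0, by omega⟩, ⟨1, by omega⟩, ?_, rfl⟩
  simp [Fin.ext_iff]

lemma dminC_pos {α : Type*} [MetricSpace α] {m : ℕ} (hm : 2 ≤ m)
    {y : Fin m → α} (hy : Function.Injective y) : 0 < dminC y := by
  obtain ⟨k, l, hkl, hd⟩ :=
    (pairSetNe hm (fun k l => dist (y k) (y l))).csInf_mem
      (pairSetFin (fun k l => dist (y k) (y l)))
  rw [dminC, hd]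
  exact dist_pos.2 fun h => hkl (hy h)

lemma dminC_le {α : Type*} [MetricSpace α] {m : ℕ} {y : Fin m → α}
    {k l : Fin m} (hkl : k ≠ l) : dminC y ≤ dist (y k) (y l) :=
  csInf_le (pairSetFin (fun k l => dist (y k) (y l))).bddBelow ⟨k, l, hkl, rfl⟩

lemma le_dmaxC {α : Type*} [MetricSpace α] {m : ℕ} (hm : 2 ≤ m)
    {y : Fin m → α} (k l : Fin m) : dist (y k) (y l) ≤ dmaxC y := by
  have hB := (pairSetFin (fun k l => dist (y k) (y l))).bddAbove
  by_cases h : k = l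
  · subst h
    rw [dist_self]
    have h01 : dist (y ⟨0, by omega⟩) (y ⟨1, by omega⟩) ≤ dmaxC y :=
      le_csSup hB ⟨⟨0, by omega⟩, ⟨1, by omega⟩, by simp [Fin.ext_iff], rfl⟩
    linarith [dist_nonneg (x := y (⟨0, by omega⟩ : Fin m)) (y := y ⟨1, by omega⟩)]
  · exact le_csSup hB ⟨k, l, h, rfl⟩

lemma dminC_le_dmaxC {α : Type*} [MetricSpace α] {m : ℕ} (hm : 2 ≤ m)
    {y : Fin m → α} : dminC y ≤ dmaxC y :=
  le_trans (dminC_le (y := y) (k := ⟨0, by omega⟩) (l := ⟨1, by omega⟩)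
    (by simp [Fin.ext_iff])) (le_dmaxC hm _ _)

lemma same_case {α : Type*} [MetricSpace α] {m n : ℕ} (hm : 2 ≤ m) (hn : 2 ≤ n)
    (y : Fin m → α) (hy : Function.Injective y)
    (a : Fin n → Fin m) (x : Fin n → α) (hcons : Consistent y a x)
    (w1 w2 : Fin m) (hw : ∀ i, pairCost y w1 w2 (x i) ≤ dist (x i) (y (a i)))
    (k l : Fin m) (hkl : k ≠ l) :
    socialCost y w1 w2 x ≤
      (2 * ((n : ℝ) - 2) * (dmaxC y / dminC y) + 1) * socialCost y k l x := by
  have hle : socialCost y w1 w2 x ≤ socialCost y k l x :=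
    Finset.sum_le_sum fun i _ => (hw i).trans (le_min (hcons i k) (hcons i l))
  have hSC : 0 ≤ socialCost y k l x :=
    Finset.sum_nonneg fun i _ => le_min dist_nonneg dist_nonneg
  have hσ : 0 ≤ dmaxC y / dminC y :=
    div_nonneg ((dminC_pos hm hy).le.trans (dminC_le_dmaxC hm)) (dminC_pos hm hy).le
  have hn2 : (0:ℝ) ≤ (n:ℝ) - 2 := by
    have : (2:ℝ) ≤ (n:ℝ) := by exact_mod_cast hn
    linarith
  nlinarith [mul_nonneg (mul_nonneg (by norm_num : (0:ℝ) ≤ 2) hn2) hσ]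

lemma diff_case {α : Type*} [MetricSpace α] {m n : ℕ} (hm : 2 ≤ m) (hn : 2 ≤ n)
    (y : Fin m → α) (hy : Function.Injective y)
    (a : Fin n → Fin m) (x : Fin n → α) (hcons : Consistent y a x)
    (i0 j0 : Fin n) (hij : i0 ≠ j0) (hdiff : a i0 ≠ a j0)
    (k l : Fin m) (hkl : k ≠ l) :
    socialCost y (a i0) (a j0) x ≤
      (2 * ((n : ℝ) - 2) * (dmaxC y / dminC y) + 1) * socialCost y k l x := by
  set D := dmaxC y with hD'
  set d := dminC y with hd'
  have hd : 0 < d := dminC_pos hm hy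
  have hDd : d ≤ D := dminC_le_dmaxC hm
  have hD : 0 ≤ D := hd.le.trans hDd
  have hσ : 0 ≤ D / d := div_nonneg hD hd.le
  have hn2 : (0:ℝ) ≤ (n:ℝ) - 2 := by
    have : (2:ℝ) ≤ (n:ℝ) := by exact_mod_cast hn
    linarith
  have hcost : ∀ i : Fin n, dist (x i) (y (a i)) ≤ pairCost y k l (x i) :=
    fun i => le_min (hcons i k) (hcons i l)
  have hnn : ∀ i ∈ univ, (0:ℝ) ≤ pairCost y k l (x i) :=
    fun i _ => le_min dist_nonneg dist_nonneg
  have hSC : 0 ≤ socialCost y k l x := Finset.sum_nonneg hnn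
  -- sum bound
  have hsum : socialCost y (a i0) (a j0) x ≤ socialCost y k l x + ((n:ℝ) - 2) * D := by
    have hle : ∀ i ∈ univ, pairCost y (a i0) (a j0) (x i) ≤
        pairCost y k l (x i) + (if i = i0 ∨ i = j0 then 0 else D) := by
      intro i _
      by_cases hi : i = i0 ∨ i = j0
      · rw [if_pos hi]
        rcases hi with rfl | rfl
        · have h1 : pairCost y (a i) (a j0) (x i) ≤ dist (x i) (y (a i)) :=
            min_le_left _ _
          linarith [hcost i]
        · have h1 : pairCost y (a i0) (a i) (x i) ≤ dist (x i) (y (a i)) :=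
            min_le_right _ _
          linarith [hcost i]
      · rw [if_neg hi]
        have h1 : pairCost y (a i0) (a j0) (x i) ≤ dist (x i) (y (a i0)) :=
          min_le_left _ _
        have h2 : dist (x i) (y (a i0)) ≤ dist (x i) (y (a i)) + dist (y (a i)) (y (a i0)) :=
          dist_triangle _ _ _
        have h3 : dist (y (a i)) (y (a i0)) ≤ D := le_dmaxC hm _ _
        linarith [hcost i]
    have hfil : univ.filter (fun i : Fin n => ¬(i = i0 ∨ i = j0)) = univ \ {i0, j0} := by
      ext i; simp [not_or]
    have hcard2 : ({i0, j0} : Finset (Fin n)).card = 2 := by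
      rw [Finset.card_insert_of_notMem (by simp [hij]), Finset.card_singleton]
    calc socialCost y (a i0) (a j0) x
        ≤ ∑ i, (pairCost y k l (x i) + if i = i0 ∨ i = j0 then 0 else D) :=
          Finset.sum_le_sum hle
      _ = socialCost y k l x + ∑ i, (if i = i0 ∨ i = j0 then (0:ℝ) else D) := by
          rw [Finset.sum_add_distrib]; rfl
      _ = socialCost y k l x + ((n:ℝ) - 2) * D := by
          congr 1
          rw [Finset.sum_ite, Finset.sum_const, Finset.sum_const, smul_zero, zero_add,
            nsmul_eq_mul, hfil, Finset.card_sdiff_of_subset (by simp), hcard2]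
          have : ((Finset.card (univ : Finset (Fin n)) - 2 : ℕ) : ℝ) = (n:ℝ) - 2 := by
            rw [Finset.card_univ, Fintype.card_fin, Nat.cast_sub hn]
            norm_num
          rw [this]
  by_cases hB : (a i0 = k ∨ a i0 = l) ∧ (a j0 = k ∨ a j0 = l)
  · have heq : socialCost y (a i0) (a j0) x = socialCost y k l x := by
      rcases hB with ⟨h1 | h1, h2 | h2⟩
      · exact absurd (h1.trans h2.symm) hdiff
      · rw [h1, h2]
      · rw [h1, h2]
        simp [socialCost, pairCost, min_comm]
      · exact absurd (h1.trans h2.symm) hdiff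
    rw [heq]
    nlinarith [mul_nonneg (mul_nonneg (by norm_num : (0:ℝ) ≤ 2) hn2) hσ]
  · push_neg at hB
    obtain ⟨i, h1, h2⟩ : ∃ i, a i ≠ k ∧ a i ≠ l := by
      by_cases hA : a i0 = k ∨ a i0 = l
      · exact ⟨j0, hB hA⟩
      · push_neg at hA; exact ⟨i0, hA⟩
    have hhk : d ≤ 2 * dist (x i) (y k) := by
      have t1 : d ≤ dist (y (a i)) (y k) := dminC_le h1
      have t2 := dist_triangle (y (a i)) (x i) (y k)
      have t3 := hcons i k
      rw [dist_comm (y (a i)) (x i)] at t2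
      linarith
    have hhl : d ≤ 2 * dist (x i) (y l) := by
      have t1 : d ≤ dist (y (a i)) (y l) := dminC_le h2
      have t2 := dist_triangle (y (a i)) (x i) (y l)
      have t3 := hcons i l
      rw [dist_comm (y (a i)) (x i)] at t2
      linarith
    have hhalf : d / 2 ≤ pairCost y k l (x i) :=
      le_min (by linarith) (by linarith)
    have hiC : pairCost y k l (x i) ≤ socialCost y k l x :=
      Finset.single_le_sum hnn (mem_univ i)
    have hC2 : d ≤ 2 * socialCost y k l x := by linarith
    have hq : (0:ℝ) ≤ ((n:ℝ) - 2) * (D / d) := mul_nonneg hn2 hσ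
    have key : ((n:ℝ) - 2) * D ≤ 2 * ((n:ℝ) - 2) * (D / d) * socialCost y k l x := by
      have h := mul_le_mul_of_nonneg_left hC2 hq
      have had : ((n:ℝ) - 2) * (D / d) * d = ((n:ℝ) - 2) * D := by
        field_simp
      nlinarith [h, had]
    linarith [hsum, key]

/-- For any `m ≥ 2` candidates at distinct locations in a Euclidean space and
`n ≥ 2` voters, Sequential Dictator has distortion at most `2(n-2)σ + 1`,
where `σ = d_max / d_min` for the candidate set. -/
theorem stmt15 {dim m n : ℕ} (hm : 2 ≤ m) (hn : 2 ≤ n)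
    (y : Fin m → EuclideanSpace ℝ (Fin dim)) (hy : Function.Injective y)
    (a : Fin n → Fin m) (x : Fin n → EuclideanSpace ℝ (Fin dim))
    (hcons : Consistent y a x) :
    socialCost y (seqDict (by omega) hm a).1 (seqDict (by omega) hm a).2 x ≤
      (2 * ((n : ℝ) - 2) * (dmaxC y / dminC y) + 1) * OPT y x := by
  obtain ⟨k, l, hkl, hO⟩ :=
    (pairSetNe hm (fun k l => socialCost y k l x)).csInf_mem
      (pairSetFin (fun k l => socialCost y k l x))
  have hOPT : OPT y x = socialCost y k l x := hO
  rw [hOPT]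
  simp only [seqDict]
  split_ifs with h h2
  · have hmem := Finset.mem_filter.1 (Finset.min'_mem _ h)
    exact diff_case hm hn y hy a x hcons _ _
      (fun he => hmem.2 (congrArg a he.symm)) (Ne.symm hmem.2) k l hkl
  · have hall : ∀ j, a j = a ⟨0, by omega⟩ := by
      intro j; by_contra hja
      exact h ⟨j, Finset.mem_filter.2 ⟨Finset.mem_univ j, hja⟩⟩
    refine same_case hm hn y hy a x hcons _ _ (fun i => ?_) k l hkl
    calc pairCost y ⟨0, by omega⟩ ⟨1, by omega⟩ (x i)
        ≤ dist (x i) (y ⟨0, by omega⟩) := min_le_left _ _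
      _ = dist (x i) (y (a i)) := by rw [hall i, h2]
  · have hall : ∀ j, a j = a ⟨0, by omega⟩ := by
      intro j; by_contra hja
      exact h ⟨j, Finset.mem_filter.2 ⟨Finset.mem_univ j, hja⟩⟩
    refine same_case hm hn y hy a x hcons _ _ (fun i => ?_) k l hkl
    calc pairCost y ⟨0, by omega⟩ (a ⟨0, by omega⟩) (x i)
        ≤ dist (x i) (y (a ⟨0, by omega⟩)) := min_le_right _ _
      _ = dist (x i) (y (a i)) := by rw [hall i]
end

section
/- The 2(n−2)σ + 1 distortion bound for Sequential Dictator is tight: place four candidates in ℝ³ at y_1 = (1,0,0), y_2 = (0,1,0), y_3 = (0,0,1), y_4 = (r,r,r) with r > 2, so d_min = √2, d_max = √((r−1)² + 2r²) and σ = d_max/d_min. Let n ≥ 3 voters be located at x_1 = y_1, x_2 = (1/2, 1/2, 0), x_3 = … = x_n = y_4, with action profile a_1 = 1, a_2 = 2, a_3 = … = a_n = 4. This location profile is consistent with the action profile (x_2 is equidistant from y_1 and y_2, which are its nearest candidates), Sequential Dictator outputs (y_1, y_2), SC((y_1, y_2), x) = (n−2)·d_max + d_min/2, and OPT(x) = d_min/2,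 so the achieved ratio equals 2(n−2)σ + 1. -/
open Finset

private lemma distE (u v : EuclideanSpace ℝ (Fin 3)) :
    dist u v = Real.sqrt ((u 0 - v 0)^2 + (u 1 - v 1)^2 + (u 2 - v 2)^2) := by
  rw [EuclideanSpace.dist_eq, Fin.sum_univ_three]
  simp [Real.dist_eq, sq_abs]

private lemma sum_split {n : ℕ} (hn : 3 ≤ n) (g : Fin n → ℝ) (t0 t1 t2 : ℝ)
    (h : ∀ i : Fin n, g i = if (i:ℕ)=0 then t0 else if (i:ℕ)=1 then t1 else t2) :
    ∑ i, g i = t0 + t1 + ((n:ℝ)-2)*t2 := by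
  have h2 : 2 ≤ n := by omega
  calc ∑ i, g i = ∑ j ∈ range n, (if j=0 then t0 else if j=1 then t1 else t2) := by
        rw [← Fin.sum_univ_eq_sum_range]
        exact Finset.sum_congr rfl fun i _ => (h i)
    _ = t0 + t1 + ((n:ℝ)-2)*t2 := by
        rw [← Finset.sum_range_add_sum_Ico _ h2, Finset.sum_range_succ,
          Finset.sum_range_succ, Finset.sum_range_zero]
        have e1 : ∑ j ∈ Ico 2 n, (if j=0 then t0 else if j=1 then t1 else t2)
            = ∑ _j ∈ Ico 2 n, t2 := by
          refine Finset.sum_congr rfl fun j hj => ?_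
          simp only [Finset.mem_Ico] at hj
          have h0 : j ≠ 0 := by omega
          have h1 : j ≠ 1 := by omega
          simp [h0, h1]
        rw [e1, Finset.sum_const, Nat.card_Ico, nsmul_eq_mul]
        have e2 : ((n - 2 : ℕ) : ℝ) = (n:ℝ) - 2 := by
          rw [Nat.cast_sub h2]; norm_num
        rw [e2]; norm_num

set_option maxHeartbeats 1600000 in
/-- Tightness of the `2(n-2)σ + 1` bound for Sequential Dictator: candidates in
`ℝ³` at `e₁, e₂, e₃, (r,r,r)` (`r > 2`, so `d_min = √2` and
`d_max = √((r-1)² + 2r²)`), voter 1 at `y 0`, voter 2 at `(1/2, 1/2, 0)`, the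
remaining voters at `y 3`, with actions `0, 1, 3, ..., 3`. The profile is
consistent, Sequential Dictator outputs `(0, 1)`, the achieved social cost is
`(n-2)·d_max + d_min/2`, the optimum is `d_min/2`, and the ratio is exactly
`2(n-2)σ + 1`. -/
theorem stmt16 (r : ℝ) (hr : 2 < r) (n : ℕ) (hn : 3 ≤ n)
    (y : Fin 4 → EuclideanSpace ℝ (Fin 3))
    (hy : y = ![EuclideanSpace.single (0 : Fin 3) (1 : ℝ),
      EuclideanSpace.single (1 : Fin 3) (1 : ℝ),
      EuclideanSpace.single (2 : Fin 3) (1 : ℝ),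
      (WithLp.equiv 2 (Fin 3 → ℝ)).symm (fun _ => r)])
    (x : Fin n → EuclideanSpace ℝ (Fin 3))
    (hx : ∀ i : Fin n, x i = if (i : ℕ) = 0 then y 0
      else if (i : ℕ) = 1 then (WithLp.equiv 2 (Fin 3 → ℝ)).symm ![1/2, 1/2, 0]
      else y 3)
    (a : Fin n → Fin 4)
    (ha : ∀ i : Fin n,
      a i = if (i : ℕ) = 0 then 0 else if (i : ℕ) = 1 then 1 else 3) :
    Consistent y a x ∧
      seqDict (by omega) (by norm_num) a = ((0 : Fin 4), (1 : Fin 4)) ∧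
      socialCost y 0 1 x =
        ((n : ℝ) - 2) * Real.sqrt ((r - 1) ^ 2 + 2 * r ^ 2) + Real.sqrt 2 / 2 ∧
      OPT y x = Real.sqrt 2 / 2 ∧
      socialCost y 0 1 x =
        (2 * ((n : ℝ) - 2) *
            (Real.sqrt ((r - 1) ^ 2 + 2 * r ^ 2) / Real.sqrt 2) + 1) *
          OPT y x := by

  have h0n : (0:ℕ) < n := by omega
  have h1n : (1:ℕ) < n := by omega
  -- coordinates of candidates
  have hy0 : y 0 = EuclideanSpace.single (0 : Fin 3) (1 : ℝ) := by rw [hy]; rfl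
  have hy1 : y 1 = EuclideanSpace.single (1 : Fin 3) (1 : ℝ) := by rw [hy]; rfl
  have hy2 : y 2 = EuclideanSpace.single (2 : Fin 3) (1 : ℝ) := by rw [hy]; rfl
  have hy3 : y 3 = (WithLp.equiv 2 (Fin 3 → ℝ)).symm (fun _ => r) := by rw [hy]; rfl
  have hsqrt2 : Real.sqrt 2 ^ 2 = 2 := Real.sq_sqrt (by norm_num)
  have hs2 : Real.sqrt (1/2) = Real.sqrt 2 / 2 := by
    have h : ((Real.sqrt 2)/2)^2 = 1/2 := by rw [div_pow, hsqrt2]; norm_num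
    rw [← h, Real.sqrt_sq (by positivity)]
  -- distance facts
  have hd01 : dist (y 0) (y 1) = Real.sqrt 2 := by
    rw [hy0, hy1, distE]; simp [EuclideanSpace.single_apply]; norm_num
  have hdq0 : dist ((WithLp.equiv 2 (Fin 3 → ℝ)).symm ![1/2, 1/2, 0]) (y 0)
      = Real.sqrt (1/2) := by
    rw [hy0, distE]; simp [EuclideanSpace.single_apply]; norm_num
  have hdq1 : dist ((WithLp.equiv 2 (Fin 3 → ℝ)).symm ![1/2, 1/2, 0]) (y 1)
      = Real.sqrt (1/2) := by
    rw [hy1, distE]; simp [EuclideanSpace.single_apply]; norm_num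
  have hdq2 : dist ((WithLp.equiv 2 (Fin 3 → ℝ)).symm ![1/2, 1/2, 0]) (y 2)
      = Real.sqrt (3/2) := by
    rw [hy2, distE]; simp [EuclideanSpace.single_apply]; norm_num
  have hdq3 : dist ((WithLp.equiv 2 (Fin 3 → ℝ)).symm ![1/2, 1/2, 0]) (y 3)
      = Real.sqrt (2*(1/2 - r)^2 + r^2) := by
    rw [hy3, distE]; simp [EuclideanSpace.single_apply]; congr 1; ring
  have hdp0 : dist (y 3) (y 0) = Real.sqrt ((r - 1) ^ 2 + 2 * r ^ 2) := by
    rw [hy0, hy3, distE]; simp [EuclideanSpace.single_apply]; congr 1; ring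
  have hdp1 : dist (y 3) (y 1) = Real.sqrt ((r - 1) ^ 2 + 2 * r ^ 2) := by
    rw [hy1, hy3, distE]; simp [EuclideanSpace.single_apply]; congr 1; ring
  -- inequalities
  have hsq3 : Real.sqrt (1/2) ≤ Real.sqrt (3/2) := Real.sqrt_le_sqrt (by norm_num)
  have hsqp : Real.sqrt (1/2) ≤ Real.sqrt (2*(1/2 - r)^2 + r^2) :=
    Real.sqrt_le_sqrt (by nlinarith)
  have hqmin : ∀ k : Fin 4,
      Real.sqrt (1/2) ≤ dist ((WithLp.equiv 2 (Fin 3 → ℝ)).symm ![1/2, 1/2, 0]) (y k) := by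
    intro k
    fin_cases k
    · exact le_of_eq hdq0.symm
    · exact le_of_eq hdq1.symm
    · exact hdq2 ▸ hsq3
    · exact hdq3 ▸ hsqp
  -- Consistency
  have hcons : Consistent y a x := by
    intro i k
    have hxi := hx i
    have hai := ha i
    by_cases h0 : (i:ℕ) = 0
    · rw [if_pos h0] at hxi hai
      rw [hxi, hai, dist_self]
      exact dist_nonneg
    · by_cases h1 : (i:ℕ) = 1
      · rw [if_neg h0, if_pos h1] at hxi hai
        rw [hxi, hai, hdq1]
        exact hqmin k
      · rw [if_neg h0, if_neg h1] at hxi hai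
        rw [hxi, hai, dist_self]
        exact dist_nonneg
  -- seqDict
  have ha0 : ∀ (h : (0:ℕ) < n), a ⟨0, h⟩ = 0 := fun h => by
    rw [ha ⟨0, h⟩]; rfl
  have hseq : seqDict (by omega : 0 < n) (by norm_num : 2 ≤ 4) a
      = ((0 : Fin 4), (1 : Fin 4)) := by
    rw [seqDict]
    have hmem : (⟨1, h1n⟩ : Fin n) ∈
        (univ.filter (fun j => a j ≠ a ⟨0, by omega⟩)) := by
      simp only [Finset.mem_filter, Finset.mem_univ, true_and]
      rw [ha0, ha ⟨1, h1n⟩]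
      simp
    have hne : (univ.filter (fun j => a j ≠ a ⟨0, by omega⟩)).Nonempty := ⟨_, hmem⟩
    rw [dif_pos hne]
    have hmin : (univ.filter (fun j => a j ≠ a ⟨0, by omega⟩)).min' hne
        = ⟨1, h1n⟩ := by
      refine le_antisymm (Finset.min'_le _ _ hmem) (Finset.le_min' _ _ _ ?_)
      intro j hj
      simp only [Finset.mem_filter, Finset.mem_univ, true_and] at hj
      rw [ha0] at hj
      have hj0 : (j : ℕ) ≠ 0 := by
        intro h
        apply hj
        rw [ha j, if_pos h]
      exact Fin.mk_le_of_le_val (by omega)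
    rw [hmin, ha0, ha ⟨1, h1n⟩]
    rfl
  -- social cost of (0,1)
  have hsc01 : socialCost y 0 1 x
      = ((n : ℝ) - 2) * Real.sqrt ((r - 1) ^ 2 + 2 * r ^ 2) + Real.sqrt 2 / 2 := by
    rw [socialCost, sum_split hn _ 0 (Real.sqrt 2 / 2)
        (Real.sqrt ((r - 1) ^ 2 + 2 * r ^ 2))]
    · ring
    · intro i
      have hxi := hx i
      by_cases h0 : (i:ℕ) = 0
      · rw [if_pos h0] at hxi
        rw [if_pos h0, hxi, pairCost, dist_self, min_eq_left dist_nonneg]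
      · by_cases h1 : (i:ℕ) = 1
        · rw [if_neg h0, if_pos h1] at hxi
          rw [if_neg h0, if_pos h1, hxi, pairCost, hdq0, hdq1, min_self, hs2]
        · rw [if_neg h0, if_neg h1] at hxi
          rw [if_neg h0, if_neg h1, hxi, pairCost, hdp0, hdp1, min_self]
  -- social cost of (0,3)
  have hsc03 : socialCost y 0 3 x = Real.sqrt 2 / 2 := by
    rw [socialCost, sum_split hn _ 0 (Real.sqrt 2 / 2) 0]
    · ring
    · intro i
      have hxi := hx i
      by_cases h0 : (i:ℕ) = 0
      · rw [if_pos h0] at hxi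
        rw [if_pos h0, hxi, pairCost, dist_self, min_eq_left dist_nonneg]
      · by_cases h1 : (i:ℕ) = 1
        · rw [if_neg h0, if_pos h1] at hxi
          rw [if_neg h0, if_pos h1, hxi, pairCost, hdq0, hdq3, hs2.symm]
          exact min_eq_left hsqp
        · rw [if_neg h0, if_neg h1] at hxi
          rw [if_neg h0, if_neg h1, hxi, pairCost, dist_self, min_eq_right dist_nonneg]
  -- lower bound for every pair
  have hlb : ∀ k l : Fin 4, Real.sqrt 2 / 2 ≤ socialCost y k l x := by
    intro k l
    rw [socialCost]
    have hterm : Real.sqrt 2 / 2 ≤ pairCost y k l (x ⟨1, h1n⟩) := by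
      have hx1 : x ⟨1, h1n⟩ = (WithLp.equiv 2 (Fin 3 → ℝ)).symm ![1/2, 1/2, 0] := by
        rw [hx ⟨1, h1n⟩]; rfl
      rw [hx1, pairCost, le_min_iff, ← hs2]
      exact ⟨hqmin k, hqmin l⟩
    calc Real.sqrt 2 / 2 ≤ pairCost y k l (x ⟨1, h1n⟩) := hterm
      _ ≤ ∑ i, pairCost y k l (x i) := by
          refine Finset.single_le_sum (f := fun i => pairCost y k l (x i)) (fun i _ => ?_) (Finset.mem_univ _)
          exact le_min dist_nonneg dist_nonneg
  -- OPT
  have hOPT : OPT y x = Real.sqrt 2 / 2 := by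
    rw [OPT]
    have hmemS : Real.sqrt 2 / 2 ∈
        {c : ℝ | ∃ k l : Fin 4, k ≠ l ∧ c = socialCost y k l x} :=
      ⟨0, 3, by decide, hsc03.symm⟩
    have hbdd : ∀ c ∈ {c : ℝ | ∃ k l : Fin 4, k ≠ l ∧ c = socialCost y k l x},
        Real.sqrt 2 / 2 ≤ c := by
      rintro c ⟨k, l, -, rfl⟩
      exact hlb k l
    exact le_antisymm (csInf_le ⟨_, hbdd⟩ hmemS) (le_csInf ⟨_, hmemS⟩ hbdd)
  refine ⟨hcons, hseq, hsc01, hOPT, ?_⟩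
  rw [hsc01, hOPT]
  have h2pos : (0:ℝ) < Real.sqrt 2 := Real.sqrt_pos.mpr (by norm_num)
  field_simp
end
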